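/- arXiv:2504.08063 — 7 statements merged into one kernel-verified Lean document; each statement's English description precedes it below -/
import Mathlib

section
/- Let F be a field of characteristic zero, let w be a tuple of variables and T, z additional variables, and let P ∈ F[T, w, z]. Suppose α ∈ F satisfies P(0, 0, α) = 0 and (∂P/∂z)(0, 0, α) = β ≠ 0, and define φ_i, ψ_i ∈ F[T, w] by φ_0 := α, ψ_0 := 1/β, and for i ≥ 0, φ_{i+1} := φ_i − P(T, w, φ_i)·ψ_i and ψ_{i+1} := 2ψ_i − ψ_i²·(∂P/∂z)(T, w, φ_{i+1}). Then for every ℓ ∈ ℕ and every i ≥ 0, there exist a natural number τ_i ≤ 2(ℓ+1)i, polynomials g_1, …, g_{τ_i} ∈ F[T, w], and two polynomials Q_i(T, u_1, …, u_{τ_i}) and Q̂_i(T, u_1, …, u_{τ_i}) in F[T, u_1, …, u_{τ_i}], such that φ_i ≡ Q_i(T, g_1, …, g_{τ_i}) mod ⟨w⟩^ℓ and ψ_i ≡ Q̂_i(T, g_1, …, g_{τ_i}) mod ⟨w⟩^ℓ. Moreover, each g_r is of the form (∂^j P/∂z^j)(T, w, γ) — the j-th order partial derivative of P with respect to z, with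 z substituted by γ — for some j ≤ ℓ + 1 and some γ ∈ F[T]. -/
open Polynomial Finset

theorem taylor_mod {S : Type*} [CommRing S] (P : S[X]) (x A : S) (I : Ideal S)
    (h : x - A ∈ I) (ℓ : ℕ) :
    P.eval x - ∑ j ∈ Finset.range ℓ, ((P.hasseDeriv j).eval A) * (x - A) ^ j ∈ I ^ ℓ := by
  set N := max (P.natDegree + 1) ℓ with hN
  have hdeg : (Polynomial.taylor A P).natDegree < N := by
    rw [Polynomial.natDegree_taylor]; omega
  have hev : P.eval x = ∑ j ∈ Finset.range N, ((P.hasseDeriv j).eval A) * (x - A) ^ j := by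
    have := Polynomial.taylor_eval A P (x - A)
    rw [sub_add_cancel] at this
    rw [← this, Polynomial.eval_eq_sum_range' hdeg]
    exact Finset.sum_congr rfl fun j _ => by rw [Polynomial.taylor_coeff]
  have hℓN : ℓ ≤ N := le_max_right _ _
  rw [hev, Finset.range_eq_Ico, ← Finset.sum_Ico_consecutive _ (Nat.zero_le ℓ) hℓN,
    ← Finset.range_eq_Ico, add_sub_cancel_left]
  refine Ideal.sum_mem _ fun j hj => ?_
  rw [Finset.mem_Ico] at hj
  have : (x - A) ^ j = (x - A) ^ ℓ * (x - A) ^ (j - ℓ) := by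
    rw [← pow_add]; congr 1; omega
  rw [this, ← mul_assoc]
  exact Ideal.mul_mem_right _ _ (Ideal.mul_mem_left _ _ (Ideal.pow_mem_pow h ℓ))

theorem mv_sub_const {R : Type*} [CommRing R] {σ : Type*} (r : MvPolynomial σ R) :
    r - MvPolynomial.C (MvPolynomial.eval (0 : σ → R) r) ∈
      Ideal.span (Set.range (MvPolynomial.X : σ → MvPolynomial σ R)) := by
  induction r using MvPolynomial.induction_on with
  | C a => simp
  | add p q hp hq => simpa [map_add, add_sub_add_comm] using add_mem hp hq
  | mul_X p j hp =>
    have hx : (MvPolynomial.X j : MvPolynomial σ R) ∈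
        Ideal.span (Set.range (MvPolynomial.X : σ → MvPolynomial σ R)) :=
      Ideal.subset_span ⟨j, rfl⟩
    simpa using Ideal.mul_mem_left _ p hx

theorem poly_sub_const {F : Type*} [CommRing F] {n : ℕ}
    (a : Polynomial (MvPolynomial (Fin n) F)) :
    a - (a.map (MvPolynomial.eval (0 : Fin n → F))).map (MvPolynomial.C) ∈
      Ideal.span (Set.range fun j : Fin n =>
        (Polynomial.C (MvPolynomial.X j) : Polynomial (MvPolynomial (Fin n) F))) := by
  have hI : Ideal.span (Set.range fun j : Fin n =>
      (Polynomial.C (MvPolynomial.X j) : Polynomial (MvPolynomial (Fin n) F))) =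
      Ideal.map (Polynomial.C (R := MvPolynomial (Fin n) F))
        (Ideal.span (Set.range (MvPolynomial.X : Fin n → MvPolynomial (Fin n) F))) := by
    rw [Ideal.map_span, ← Set.range_comp]; rfl
  rw [hI]
  induction a using Polynomial.induction_on' with
  | add p q hp hq => simpa [Polynomial.map_add, add_sub_add_comm] using add_mem hp hq
  | monomial k r =>
    rw [Polynomial.map_monomial, Polynomial.map_monomial, ← map_sub (Polynomial.monomial k),
      ← Polynomial.C_mul_X_pow_eq_monomial]
    exact Ideal.mul_mem_right _ _ (Ideal.mem_map_of_mem _ (mv_sub_const r))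

theorem hasse_eq {F : Type*} [Field F] [CharZero F] {n : ℕ}
    (P : Polynomial (Polynomial (MvPolynomial (Fin n) F))) (j : ℕ)
    (y : Polynomial (MvPolynomial (Fin n) F)) :
    (Polynomial.hasseDeriv j P).eval y =
      Polynomial.C (MvPolynomial.C ((j.factorial : F)⁻¹)) *
        (((fun q => Polynomial.derivative q)^[j] P).eval y) := by
  have h2 : (fun q => Polynomial.derivative q)^[j] P = j.factorial • (Polynomial.hasseDeriv j P) := by
    have h := Polynomial.factorial_smul_hasseDeriv (R := Polynomial (MvPolynomial (Fin n) F)) j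
    have := congrFun h P
    simpa using this.symm
  rw [h2]
  rw [Polynomial.eval_smul, nsmul_eq_mul]
  have hcast : ((j.factorial : ℕ) : Polynomial (MvPolynomial (Fin n) F)) =
      Polynomial.C (MvPolynomial.C ((j.factorial : ℕ) : F)) := by simp
  rw [hcast, ← mul_assoc, ← Polynomial.C_mul, ← MvPolynomial.C_mul,
    inv_mul_cancel₀ (by exact_mod_cast j.factorial_ne_zero), MvPolynomial.C_1, Polynomial.C_1,
    one_mul]





/-!
Claim `induction-over-NI`: the Newton iterates `φ_i, ψ_i` are, modulo `⟨w⟩^ℓ`,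
compositions of few "generators" of the form `(∂^j P/∂z^j)(T, w, γ)` with `γ ∈ F[T]`.

`P ∈ F[T, w, z]` is represented as `Polynomial (Polynomial (MvPolynomial (Fin n) F))`,
with `z` the outer variable and `T` the inner one; elements of `F[T, w]` are
`Polynomial (MvPolynomial (Fin n) F)` (polynomials in `T` over `F[w]`); polynomials
`Q(T, u_1, …, u_τ) ∈ F[T, u]` are `MvPolynomial (Fin τ) (Polynomial F)`, composed with
the generators via `MvPolynomial.eval₂`.
-/

noncomputable section

theorem stmt_4 {F : Type*} [Field F] [CharZero F] {n : ℕ}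
    (P : Polynomial (Polynomial (MvPolynomial (Fin n) F)))
    (α β : F)
    (hα : (P.map ((MvPolynomial.eval (0 : Fin n → F)).comp
        (Polynomial.evalRingHom (0 : MvPolynomial (Fin n) F)))).eval α = 0)
    (hβ : ((Polynomial.derivative P).map ((MvPolynomial.eval (0 : Fin n → F)).comp
        (Polynomial.evalRingHom (0 : MvPolynomial (Fin n) F)))).eval α = β)
    (hβ0 : β ≠ 0)
    (φ ψ : ℕ → Polynomial (MvPolynomial (Fin n) F))
    (hφ0 : φ 0 = Polynomial.C (MvPolynomial.C α))
    (hψ0 : ψ 0 = Polynomial.C (MvPolynomial.C β⁻¹))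
    (hφ : ∀ i, φ (i + 1) = φ i - P.eval (φ i) * ψ i)
    (hψ : ∀ i, ψ (i + 1) = 2 * ψ i - ψ i ^ 2 * (Polynomial.derivative P).eval (φ (i + 1))) :
    ∀ (ℓ : ℕ) (i : ℕ), ∃ τ : ℕ, τ ≤ 2 * (ℓ + 1) * i ∧
      ∃ (g : Fin τ → Polynomial (MvPolynomial (Fin n) F))
        (Q Qhat : MvPolynomial (Fin τ) (Polynomial F)),
        φ i - MvPolynomial.eval₂
            (Polynomial.mapRingHom (MvPolynomial.C : F →+* MvPolynomial (Fin n) F)) g Q ∈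
          (Ideal.span (Set.range fun j : Fin n =>
            (Polynomial.C (MvPolynomial.X j) : Polynomial (MvPolynomial (Fin n) F)))) ^ ℓ ∧
        ψ i - MvPolynomial.eval₂
            (Polynomial.mapRingHom (MvPolynomial.C : F →+* MvPolynomial (Fin n) F)) g Qhat ∈
          (Ideal.span (Set.range fun j : Fin n =>
            (Polynomial.C (MvPolynomial.X j) : Polynomial (MvPolynomial (Fin n) F)))) ^ ℓ ∧
        ∀ r : Fin τ, ∃ j ≤ ℓ + 1, ∃ γ : Polynomial F,
          g r = ((fun q => Polynomial.derivative q)^[j] P).eval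
            (γ.map (MvPolynomial.C : F →+* MvPolynomial (Fin n) F)) := by
  intro ℓ i
  set ρ : Polynomial F →+* Polynomial (MvPolynomial (Fin n) F) :=
    Polynomial.mapRingHom (MvPolynomial.C : F →+* MvPolynomial (Fin n) F) with hρ
  set I : Ideal (Polynomial (MvPolynomial (Fin n) F)) := Ideal.span (Set.range fun j : Fin n =>
    (Polynomial.C (MvPolynomial.X j) : Polynomial (MvPolynomial (Fin n) F))) with hIdef
  set K : Ideal (Polynomial (MvPolynomial (Fin n) F)) := I ^ ℓ with hK
  set π := Ideal.Quotient.mk K with hπ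
  induction i with
  | zero =>
    refine ⟨0, by omega, Fin.elim0, MvPolynomial.C (Polynomial.C α),
      MvPolynomial.C (Polynomial.C β⁻¹), ?_, ?_, fun r => r.elim0⟩
    · simp [hφ0, MvPolynomial.eval₂_C, hρ, Polynomial.map_C]
    · simp [hψ0, MvPolynomial.eval₂_C, hρ, Polynomial.map_C]
  | succ i ih =>
    obtain ⟨τ, hτ, g, Q, Qhat, hQmem, hQhmem, hg⟩ := ih
    set A1 : Polynomial F := (φ i).map (MvPolynomial.eval (0 : Fin n → F)) with hA1
    set A2 : Polynomial F := (φ (i+1)).map (MvPolynomial.eval (0 : Fin n → F)) with hA2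
    set gφ : Fin (ℓ+1) → Polynomial (MvPolynomial (Fin n) F) := fun k =>
      ((fun q => Polynomial.derivative q)^[(k : ℕ)] P).eval (A1.map MvPolynomial.C) with hgφ
    set gψ : Fin (ℓ+1) → Polynomial (MvPolynomial (Fin n) F) := fun k =>
      ((fun q => Polynomial.derivative q)^[(k : ℕ)+1] P).eval (A2.map MvPolynomial.C) with hgψ
    set g' : Fin (τ + (ℓ+1) + (ℓ+1)) → Polynomial (MvPolynomial (Fin n) F) :=
      Fin.append (Fin.append g gφ) gψ with hg'
    set E := MvPolynomial.eval₂Hom ρ g with hE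
    set E' := MvPolynomial.eval₂Hom ρ g' with hE'
    set e1 : Fin τ → Fin (τ + (ℓ+1) + (ℓ+1)) := fun r => (r.castAdd (ℓ+1)).castAdd (ℓ+1) with he1
    set e2 : Fin (ℓ+1) → Fin (τ + (ℓ+1) + (ℓ+1)) := fun k => ((Fin.natAdd τ k)).castAdd (ℓ+1) with he2
    set e3 : Fin (ℓ+1) → Fin (τ + (ℓ+1) + (ℓ+1)) := Fin.natAdd (τ+(ℓ+1)) with he3
    have hge1 : g' ∘ e1 = g := by
      funext r; simp [hg', he1, Fin.append_left]
    have hge2 : ∀ k, g' (e2 k) = gφ k := by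
      intro k; simp [hg', he2, Fin.append_left, Fin.append_right]
    have hge3 : ∀ k, g' (e3 k) = gψ k := by
      intro k; simp [hg', he3, Fin.append_right]
    set Q0 := MvPolynomial.rename e1 Q with hQ0
    set Qh0 := MvPolynomial.rename e1 Qhat with hQh0
    have hEQ0 : E' Q0 = E Q := by
      rw [hE', hE, hQ0, MvPolynomial.eval₂Hom_rename, hge1]
    have hEQh0 : E' Qh0 = E Qhat := by
      rw [hE', hE, hQh0, MvPolynomial.eval₂Hom_rename, hge1]
    set cpoly : ℕ → Polynomial F := fun j => Polynomial.C ((j.factorial : F)⁻¹) with hcpoly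
    set TS1 : MvPolynomial (Fin (τ + (ℓ+1) + (ℓ+1))) (Polynomial F) :=
      ∑ j : Fin ℓ, MvPolynomial.C (cpoly j) * MvPolynomial.X (e2 j.castSucc) *
        (Q0 - MvPolynomial.C A1) ^ (j : ℕ) with hTS1
    set Q' : MvPolynomial (Fin (τ + (ℓ+1) + (ℓ+1))) (Polynomial F) := Q0 - TS1 * Qh0 with hQ'def
    set TS2 : MvPolynomial (Fin (τ + (ℓ+1) + (ℓ+1))) (Polynomial F) :=
      ∑ j : Fin ℓ, MvPolynomial.C (cpoly j) * MvPolynomial.X (e3 j.castSucc) *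
        (Q' - MvPolynomial.C A2) ^ (j : ℕ) with hTS2
    set Qhat' : MvPolynomial (Fin (τ + (ℓ+1) + (ℓ+1))) (Polynomial F) :=
      2 * Qh0 - Qh0 ^ 2 * TS2 with hQh'def
    have hQ : φ i - E Q ∈ K := hQmem
    have hQhat : ψ i - E Qhat ∈ K := hQhmem
    have hπQ : π (φ i) = π (E Q) := Ideal.Quotient.eq.2 hQ
    have hπQh : π (ψ i) = π (E Qhat) := Ideal.Quotient.eq.2 hQhat
    have hρA1 : ρ A1 = A1.map MvPolynomial.C := rfl
    have hρA2 : ρ A2 = A2.map MvPolynomial.C := rfl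
    -- Taylor for the φ step
    have htay1 : π (P.eval (φ i)) =
        π (∑ j ∈ Finset.range ℓ, ((P.hasseDeriv j).eval (A1.map MvPolynomial.C)) *
          (φ i - A1.map MvPolynomial.C) ^ j) :=
      Ideal.Quotient.eq.2 (taylor_mod P (φ i) _ I (poly_sub_const (φ i)) ℓ)
    have hETS1 : E' TS1 = ∑ j : Fin ℓ, ρ (cpoly j) * gφ j.castSucc *
        (E Q - ρ A1) ^ (j : ℕ) := by
      rw [hTS1, map_sum]
      refine Finset.sum_congr rfl fun j _ => ?_
      rw [map_mul, map_mul, map_pow, map_sub, MvPolynomial.eval₂Hom_C, MvPolynomial.eval₂Hom_X',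
        MvPolynomial.eval₂Hom_C, hge2, hEQ0]
    have hterm1 : ∀ j : Fin ℓ,
        π ((P.hasseDeriv (j : ℕ)).eval (A1.map MvPolynomial.C) *
          (φ i - A1.map MvPolynomial.C) ^ (j : ℕ)) =
        π (ρ (cpoly (j : ℕ)) * gφ j.castSucc * (E Q - ρ A1) ^ (j : ℕ)) := by
      intro j
      have h1 : ρ (cpoly (j : ℕ)) * gφ j.castSucc =
          (P.hasseDeriv (j : ℕ)).eval (A1.map MvPolynomial.C) := by
        rw [hasse_eq]
        simp [hρ, hcpoly, hgφ, Polynomial.map_C]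
      rw [h1, map_mul, map_mul, map_pow, map_pow, map_sub, map_sub, hπQ, hρA1]
    have hπTS1 : π (P.eval (φ i)) = π (E' TS1) := by
      rw [htay1, hETS1, map_sum, map_sum, ← Fin.sum_univ_eq_sum_range
        (fun j => π ((P.hasseDeriv j).eval (A1.map MvPolynomial.C) *
          (φ i - A1.map MvPolynomial.C) ^ j)) ℓ]
      exact Finset.sum_congr rfl fun j _ => hterm1 j
    have hπφ : π (φ (i+1)) = π (E' Q') := by
      rw [hφ i, hQ'def]
      simp only [map_sub, map_mul]
      rw [hEQ0, hEQh0, hπQ, hπQh, hπTS1]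
    -- Taylor for the ψ step
    have htay2 : π ((Polynomial.derivative P).eval (φ (i+1))) =
        π (∑ j ∈ Finset.range ℓ,
          (((Polynomial.derivative P).hasseDeriv j).eval (A2.map MvPolynomial.C)) *
          (φ (i+1) - A2.map MvPolynomial.C) ^ j) :=
      Ideal.Quotient.eq.2 (taylor_mod _ (φ (i+1)) _ I (poly_sub_const (φ (i+1))) ℓ)
    have hETS2 : E' TS2 = ∑ j : Fin ℓ, ρ (cpoly j) * gψ j.castSucc *
        (E' Q' - ρ A2) ^ (j : ℕ) := by
      rw [hTS2, map_sum]
      refine Finset.sum_congr rfl fun j _ => ?_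
      rw [map_mul, map_mul, map_pow, map_sub, MvPolynomial.eval₂Hom_C, MvPolynomial.eval₂Hom_X',
        MvPolynomial.eval₂Hom_C, hge3]
    have hterm2 : ∀ j : Fin ℓ,
        π (((Polynomial.derivative P).hasseDeriv (j : ℕ)).eval (A2.map MvPolynomial.C) *
          (φ (i+1) - A2.map MvPolynomial.C) ^ (j : ℕ)) =
        π (ρ (cpoly (j : ℕ)) * gψ j.castSucc * (E' Q' - ρ A2) ^ (j : ℕ)) := by
      intro j
      have h1 : ρ (cpoly (j : ℕ)) * gψ j.castSucc =
          ((Polynomial.derivative P).hasseDeriv (j : ℕ)).eval (A2.map MvPolynomial.C) := by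
        rw [hasse_eq]
        simp [hρ, hcpoly, hgψ, Polynomial.map_C, Function.iterate_succ_apply]
      rw [h1, map_mul, map_mul, map_pow, map_pow, map_sub, map_sub, hπφ, hρA2]
    have hπTS2 : π ((Polynomial.derivative P).eval (φ (i+1))) = π (E' TS2) := by
      rw [htay2, hETS2, map_sum, map_sum, ← Fin.sum_univ_eq_sum_range
        (fun j => π (((Polynomial.derivative P).hasseDeriv j).eval (A2.map MvPolynomial.C) *
          (φ (i+1) - A2.map MvPolynomial.C) ^ j)) ℓ]
      exact Finset.sum_congr rfl fun j _ => hterm2 j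
    have hπψ : π (ψ (i+1)) = π (E' Qhat') := by
      rw [hψ i, hQh'def]
      simp only [map_sub, map_mul, map_pow, map_ofNat]
      rw [hEQh0, hπQh, hπTS2]
    refine ⟨τ + (ℓ+1) + (ℓ+1), by rw [Nat.mul_succ]; omega, g', Q', Qhat',
      Ideal.Quotient.eq.1 hπφ, Ideal.Quotient.eq.1 hπψ, ?_⟩
    intro r
    refine Fin.addCases (fun r => ?_) (fun k => ?_) r
    · refine Fin.addCases (fun r => ?_) (fun k => ?_) r
      · obtain ⟨j, hj, γ, hγ⟩ := hg r
        exact ⟨j, hj, γ, by simpa [hg', Fin.append_left] using hγ⟩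
      · exact ⟨(k : ℕ), by omega, A1, by simp [hg', hgφ, Fin.append_left, Fin.append_right]⟩
    · exact ⟨(k : ℕ) + 1, by omega, A2, by simp [hg', hgψ, Fin.append_right]⟩
end
end

section
/- Let F be a field of characteristic zero. Let P ∈ F[T, x, y] and let R ∈ F[x] be a polynomial of degree at most d such that P(T, x, R(x)) is identically zero and (∂P/∂y)(T, 0, R(0)) is a nonzero polynomial in F[T]. Then there exist κ ∈ F and a (d+1)-variate polynomial Q(u_0, …, u_d) ∈ F[u_0, …, u_d] of degree at most d such that R(x) ≡ Q(h_0(κ, x), h_1(κ, x), …, h_d(κ, x)) mod ⟨x⟩^{d+1}, where for every i ∈ {0, 1, …, d} the polynomial h_i(T, x) is defined as h_i(T, x) := ((∂^i P/∂y^i)(T, x, R(0)) − (∂^i P/∂y^i)(T, 0, R(0))) trunc ⟨x⟩^{d+1}, with ∂^i P/∂y^i denoting the i-th order partial derivative of P with respect to y. -/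
/-!
Lemma `CKS-updated-rational-in-T`: a low-degree root `R(x)` of `P(T, x, y)` is,
modulo `⟨x⟩^{d+1}`, a low-degree composition of the truncated shifted partial
derivatives `h_i(κ, x)`.

`P ∈ F[T, x, y]` is represented as `Polynomial (Polynomial (MvPolynomial (Fin n) F))`,
with `y` the outer variable and `T` the inner one, and `R ∈ F[x]` as
`MvPolynomial (Fin n) F`.  Truncation `trunc ⟨x⟩^{d+1}` keeps all monomials of
`x`-degree at most `d`; it is realized via homogeneous components, applied to each
`T`-coefficient.
-/

noncomputable section

/-- Truncation of an `MvPolynomial` to total degree at most `d`. -/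
def truncX {F : Type*} [Field F] {n : ℕ} (d : ℕ) (p : MvPolynomial (Fin n) F) :
    MvPolynomial (Fin n) F :=
  ∑ i ∈ Finset.range (d + 1), MvPolynomial.homogeneousComponent i p

/-- Coefficientwise truncation of an element of `F[T, x]` to `x`-degree at most `d`. -/
def polyTruncX {F : Type*} [Field F] {n : ℕ} (d : ℕ)
    (q : Polynomial (MvPolynomial (Fin n) F)) : Polynomial (MvPolynomial (Fin n) F) :=
  ∑ j ∈ q.support, Polynomial.monomial j (truncX d (q.coeff j))

/-!
Write `S = R - R(0) ∈ ⟨x⟩` and let `Q(y) = P(κ, x, R(0) + y)`, whose coefficients are the Hasse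
derivatives `b_i`, for a `κ` with `γ = b₁(0) ≠ 0`. Then `S` is a root of `Q`, hence a fixed point of
the Newton map `s ↦ s - γ⁻¹ Q(s)`, whose linear coefficient `1 - γ⁻¹ b₁` lies in `⟨x⟩`; so each
Newton step gains one power of `⟨x⟩`. Modulo `⟨x⟩^{d+1}` every `b_i` with `i ≤ d` equals
`b_i(0) + h_i(κ, x) / i!`, so the iterates starting from `0` stay in the algebra generated by the
`h_i(κ, x)`, and `S` is congruent to one of them. Truncating the resulting polynomial in the
`h_i(κ, x) ∈ ⟨x⟩` to degree `d` costs only terms in `⟨x⟩^{d+1}`.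
-/

section Newton

open Polynomial

variable {B : Type*} [CommRing B]

theorem Polynomial.eval_map_of_apply_eq {R S : Type*} [CommSemiring R] [CommSemiring S]
    (f : R →+* S) (q : R[X]) {a : R} {b : S} (hab : f a = b) :
    (q.map f).eval b = f (q.eval a) := by
  rw [eval_map, ← hab, eval₂_at_apply]

theorem Polynomial.eval_sub_eval_mem_pow_succ {J : Ideal B} {p : B[X]} (hp : p.coeff 1 ∈ J)
    {s t : B} (ht : t ∈ J) {k : ℕ} (hst : s - t ∈ J ^ (k + 1)) :
    p.eval s - p.eval t ∈ J ^ (k + 2) := by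
  obtain ⟨c, hc⟩ := p.binomExpansion t (s - t)
  rw [add_sub_cancel] at hc
  have hderiv : p.derivative.eval t ∈ J := by
    obtain ⟨u, hu⟩ := sub_dvd_eval_sub t 0 p.derivative
    rw [sub_zero, ← coeff_zero_eq_eval_zero, coeff_derivative, zero_add, Nat.cast_zero, zero_add,
      mul_one] at hu
    rw [← sub_add_cancel (p.derivative.eval t) (p.coeff 1), hu]
    exact add_mem (Ideal.mul_mem_right _ _ ht) hp
  have hsq : (s - t) ^ 2 ∈ J ^ (k + 2) := by
    have := Ideal.pow_mem_pow hst 2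
    rw [← pow_mul] at this
    exact Ideal.pow_le_pow_right (by omega) this
  have hdiff : p.eval s - p.eval t = p.derivative.eval t * (s - t) + c * (s - t) ^ 2 := by
    rw [hc]
    ring
  rw [hdiff]
  refine add_mem ?_ (Ideal.mul_mem_left _ _ hsq)
  rw [pow_succ' J (k + 1)]
  exact Ideal.mul_mem_mul hderiv hst

theorem Polynomial.mem_of_eval_eq_self {E : Type*} [SetLike E B] [SubringClass E B] {S : E}
    {J : Ideal B} {N : ℕ} (hJS : ((J ^ N : Ideal B) : Set B) ⊆ S) {p : B[X]}
    (hpS : ∀ i < N, p.coeff i ∈ S) (hp : p.coeff 1 ∈ J) {s : B} (hs : s ∈ J)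
    (hfix : p.eval s = s) : s ∈ S := by
  have heval : ∀ t ∈ S, t ∈ J → p.eval t ∈ S := by
    intro t htS htJ
    rw [eval_eq_sum, sum_def]
    refine sum_mem fun i _ => ?_
    by_cases hi : i < N
    · exact mul_mem (hpS i hi) (pow_mem htS i)
    · exact hJS (Ideal.mul_mem_left _ _
        (Ideal.pow_le_pow_right (not_lt.mp hi) (Ideal.pow_mem_pow htJ i)))
  have happrox : ∀ k, ∃ t ∈ S, s - t ∈ J ^ (k + 1) := by
    intro k
    induction k with
    | zero => exact ⟨0, zero_mem S, by simpa using hs⟩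
    | succ k ih =>
      obtain ⟨t, htS, hst⟩ := ih
      have htJ : t ∈ J := by
        simpa using sub_mem hs (Ideal.pow_le_self k.succ_ne_zero hst)
      refine ⟨p.eval t, heval t htS htJ, ?_⟩
      have := p.eval_sub_eval_mem_pow_succ hp htJ hst
      rwa [hfix] at this
  obtain ⟨t, htS, hst⟩ := happrox N
  simpa using add_mem htS (hJS (Ideal.pow_le_pow_right N.le_succ hst))

theorem Polynomial.exists_mem_sub_mem_pow_of_eval_eq_zero {F A : Type*} [Field F] [CommRing A]
    [Algebra F A] (D : Subalgebra F A) {J : Ideal A} {N : ℕ} {Q : A[X]}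
    (hQ : ∀ i < N, ∃ c ∈ D, Q.coeff i - c ∈ J ^ N) {γ : F} (hγ : γ ≠ 0)
    (hQ₁ : Q.coeff 1 - algebraMap F A γ ∈ J) {s : A} (hs : s ∈ J) (hroot : Q.eval s = 0) :
    ∃ c ∈ D, s - c ∈ J ^ N := by
  set E := (D.map (Ideal.Quotient.mkₐ F (J ^ N))).comap (Ideal.Quotient.mkₐ F (J ^ N))
  have hmemE : ∀ x, x ∈ E ↔ ∃ c ∈ D, x - c ∈ J ^ N := by
    intro x
    simp only [E, Subalgebra.mem_comap, Subalgebra.mem_map, Ideal.Quotient.mkₐ_eq_mk,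
      Ideal.Quotient.eq]
    exact exists_congr fun c => and_congr_right fun _ => by rw [← neg_mem_iff, neg_sub]
  have hXE : ∀ i, (X : A[X]).coeff i ∈ E := by
    intro i
    rw [coeff_X]
    split_ifs <;> simp
  refine (hmemE s).1 (mem_of_eval_eq_self (p := X - γ⁻¹ • Q) (N := N) (J := J) ?_ ?_ ?_ hs ?_)
  · exact fun x hx => (hmemE x).2 ⟨0, zero_mem D, by simpa using hx⟩
  · intro i hi
    rw [coeff_sub, coeff_smul]
    exact sub_mem (hXE i) (Subalgebra.smul_mem _ ((hmemE _).2 (hQ i hi)) _)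
  · have : (X - γ⁻¹ • Q).coeff 1 = -γ⁻¹ • (Q.coeff 1 - algebraMap F A γ) := by
      rw [coeff_sub, coeff_smul, coeff_X_one, neg_smul, smul_sub,
        Algebra.smul_def γ⁻¹ (algebraMap F A γ), ← map_mul, inv_mul_cancel₀ hγ, map_one]
      abel
    rw [this]
    exact Submodule.smul_of_tower_mem _ _ hQ₁
  · rw [eval_sub, eval_smul, eval_X, hroot, smul_zero, sub_zero]

end Newton

theorem sub_inv_natCast_smul_mem_of_sub_natCast_mul_mem {F A : Type*} [Field F] [CommRing A]
    [Algebra F A] {K : Ideal A} {m : ℕ} (hm : (m : F) ≠ 0) {v x : A} (h : v - m * x ∈ K) :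
    x - (m : F)⁻¹ • v ∈ K := by
  convert Submodule.smul_of_tower_mem _ (-(m : F)⁻¹) h using 1
  rw [← nsmul_eq_mul, ← Nat.cast_smul_eq_nsmul F, smul_sub, smul_smul, neg_mul,
    inv_mul_cancel₀ hm, neg_smul, neg_smul, one_smul]
  abel

namespace MvPolynomial

theorem aeval_mem_pow_of_mem_pow_idealOfVars {σ R A : Type*} [CommSemiring R] [CommSemiring A]
    [Algebra R A] {J : Ideal A} {V : σ → A} (hV : ∀ j, V j ∈ J) {p : MvPolynomial σ R} {k : ℕ}
    (hp : p ∈ idealOfVars σ R ^ k) : aeval V p ∈ J ^ k := by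
  have hmap : (idealOfVars σ R).map (aeval V) ≤ J := by
    rw [Ideal.map_span, Ideal.span_le]
    rintro _ ⟨_, ⟨j, rfl⟩, rfl⟩
    simpa using hV j
  have := Ideal.mem_map_of_mem (aeval V) hp
  rw [Ideal.map_pow] at this
  exact Ideal.pow_right_mono hmap k this

theorem sub_C_eval_zero_mem_idealOfVars {σ R : Type*} [CommRing R] (p : MvPolynomial σ R) :
    p - C (eval 0 p) ∈ idealOfVars σ R := by
  rw [← pow_one (idealOfVars σ R), mem_pow_idealOfVars_iff']
  intro m hm
  rw [Nat.lt_one_iff, Finsupp.degree_eq_zero_iff] at hm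
  rw [hm, coeff_sub, coeff_zero_C, ← constantCoeff_eq, ← eval_zero, sub_self]

end MvPolynomial

section Truncation

variable {F : Type*} [Field F] {n : ℕ}

theorem coeff_truncX (d : ℕ) (p : MvPolynomial (Fin n) F) (m : Fin n →₀ ℕ) :
    (truncX d p).coeff m = if m.degree ≤ d then p.coeff m else 0 := by
  simp [truncX, MvPolynomial.coeff_sum, MvPolynomial.coeff_homogeneousComponent]

theorem totalDegree_truncX_le (d : ℕ) (p : MvPolynomial (Fin n) F) :
    (truncX d p).totalDegree ≤ d := by
  refine Finset.sup_le fun m hm => ?_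
  rw [MvPolynomial.mem_support_iff, coeff_truncX] at hm
  by_contra hlt
  exact hm (if_neg hlt)

theorem sub_truncX_mem_pow_idealOfVars (d : ℕ) (p : MvPolynomial (Fin n) F) :
    p - truncX d p ∈ MvPolynomial.idealOfVars (Fin n) F ^ (d + 1) := by
  rw [MvPolynomial.mem_pow_idealOfVars_iff']
  intro m hm
  rw [MvPolynomial.coeff_sub, coeff_truncX, if_pos (Nat.lt_succ_iff.mp hm), sub_self]

theorem exists_totalDegree_le_sub_aeval_mem_pow {A : Type*} [CommRing A] [Algebra F A]
    {J : Ideal A} {V : Fin n → A} (hV : ∀ j, V j ∈ J) {c : A}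
    (hc : c ∈ Algebra.adjoin F (Set.range V)) (d : ℕ) :
    ∃ Q : MvPolynomial (Fin n) F, Q.totalDegree ≤ d ∧ c - MvPolynomial.aeval V Q ∈ J ^ (d + 1) := by
  rw [Algebra.adjoin_range_eq_range_aeval] at hc
  obtain ⟨Q, rfl⟩ := hc
  refine ⟨truncX d Q, totalDegree_truncX_le d Q, ?_⟩
  have := MvPolynomial.aeval_mem_pow_of_mem_pow_idealOfVars hV (sub_truncX_mem_pow_idealOfVars d Q)
  rwa [map_sub] at this

theorem eval_polyTruncX_sub_eval_mem_pow (d : ℕ) (q : Polynomial (MvPolynomial (Fin n) F))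
    (a : MvPolynomial (Fin n) F) :
    (polyTruncX d q).eval a - q.eval a ∈ MvPolynomial.idealOfVars (Fin n) F ^ (d + 1) := by
  rw [polyTruncX, Polynomial.eval_finsetSum, Polynomial.eval_eq_sum, Polynomial.sum,
    ← Finset.sum_sub_distrib]
  refine Ideal.sum_mem _ fun j _ => ?_
  rw [Polynomial.eval_monomial, ← sub_mul, ← neg_sub]
  exact Ideal.mul_mem_right _ _ (neg_mem (sub_truncX_mem_pow_idealOfVars d _))

open Nat Polynomial in
theorem eval_polyTruncX_iterate_derivative_sub_mem_pow (d i : ℕ)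
    (P : Polynomial (Polynomial (MvPolynomial (Fin n) F))) (r : Polynomial (MvPolynomial (Fin n) F))
    (κ : F) :
    (polyTruncX d ((derivative^[i] P).eval r - ((derivative^[i] P).eval r).map
        ((MvPolynomial.C : F →+* MvPolynomial (Fin n) F).comp (MvPolynomial.eval 0)))).eval
        (MvPolynomial.C κ) -
      (i ! : MvPolynomial (Fin n) F) *
        (((taylor r P).map (evalRingHom (MvPolynomial.C κ))).coeff i -
          MvPolynomial.C (MvPolynomial.eval 0
            (((taylor r P).map (evalRingHom (MvPolynomial.C κ))).coeff i))) ∈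
      MvPolynomial.idealOfVars (Fin n) F ^ (d + 1) := by
  set q := (derivative^[i] P).eval r
  have hq : q.eval (MvPolynomial.C κ) =
      i ! * ((taylor r P).map (evalRingHom (MvPolynomial.C κ))).coeff i := by
    rw [coeff_map, taylor_coeff, coe_evalRingHom, ← eval_natCast_mul, ← eval_natCast_mul (x := r),
      ← nsmul_eq_mul, ← LinearMap.smul_apply, factorial_smul_hasseDeriv]
  have hconst : (q.map ((MvPolynomial.C : F →+* MvPolynomial (Fin n) F).comp
      (MvPolynomial.eval 0))).eval (MvPolynomial.C κ) =
      MvPolynomial.C (MvPolynomial.eval 0 (q.eval (MvPolynomial.C κ))) :=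
    eval_map_of_apply_eq _ _ (by simp)
  convert eval_polyTruncX_sub_eval_mem_pow d (q - q.map _) (MvPolynomial.C κ) using 2
  rw [eval_sub, hconst, hq, map_mul, map_mul, map_natCast, map_natCast, mul_sub]

end Truncation

theorem stmt_5_general {F : Type*} [Field F] [CharZero F] {n : ℕ} (d : ℕ)
    (P : Polynomial (Polynomial (MvPolynomial (Fin n) F)))
    (R : MvPolynomial (Fin n) F)
    -- `P(T, x, R(x)) ≡ 0`:
    (hroot : P.eval (Polynomial.C R) = 0)
    -- `(∂P/∂y)(T, 0, R(0))` is a nonzero polynomial in `F[T]`: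
    (hnd : (((Polynomial.derivative P).eval
        (Polynomial.C (MvPolynomial.C (MvPolynomial.eval (0 : Fin n → F) R)))).map
        (MvPolynomial.eval (0 : Fin n → F))) ≠ 0)
    -- `h i = ((∂^i P/∂y^i)(T, x, R(0)) − (∂^i P/∂y^i)(T, 0, R(0))) trunc ⟨x⟩^{d+1}`:
    (h : ℕ → Polynomial (MvPolynomial (Fin n) F))
    (hh : ∀ i : ℕ, h i = polyTruncX d
      ((((fun q => Polynomial.derivative q)^[i] P).eval
          (Polynomial.C (MvPolynomial.C (MvPolynomial.eval (0 : Fin n → F) R)))) -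
        ((((fun q => Polynomial.derivative q)^[i] P).eval
            (Polynomial.C (MvPolynomial.C (MvPolynomial.eval (0 : Fin n → F) R)))).map
          ((MvPolynomial.C : F →+* MvPolynomial (Fin n) F).comp
            (MvPolynomial.eval (0 : Fin n → F)))))) :
    ∃ (κ : F) (Q : MvPolynomial (Fin (d + 1)) F), Q.totalDegree ≤ d ∧
      R - MvPolynomial.aeval
          (fun i : Fin (d + 1) => Polynomial.eval (MvPolynomial.C κ) (h i)) Q ∈
        (Ideal.span (Set.range (MvPolynomial.X : Fin n → MvPolynomial (Fin n) F))) ^ (d + 1) := by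
  set r : Polynomial (MvPolynomial (Fin n) F) :=
    Polynomial.C (MvPolynomial.C (MvPolynomial.eval 0 R))
  obtain ⟨κ, hκ⟩ : ∃ κ : F, (((Polynomial.derivative P).eval r).map
      (MvPolynomial.eval 0)).eval κ ≠ 0 := by
    by_contra! hc
    exact hnd (Polynomial.zero_of_eval_zero _ hc)
  set Q := (Polynomial.taylor r P).map (Polynomial.evalRingHom (MvPolynomial.C κ))
  set I := MvPolynomial.idealOfVars (Fin n) F
  set V : Fin (d + 1) → MvPolynomial (Fin n) F := fun i => (h i).eval (MvPolynomial.C κ)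
  have hV : ∀ i : Fin (d + 1), V i - (i.val.factorial : MvPolynomial (Fin n) F) *
      (Q.coeff i - MvPolynomial.C (MvPolynomial.eval 0 (Q.coeff i))) ∈ I ^ (d + 1) := fun i => by
    simpa only [V, hh] using eval_polyTruncX_iterate_derivative_sub_mem_pow d i P r κ
  have hVI : ∀ i, V i ∈ I := fun i => by
    have := add_mem (Ideal.pow_le_self d.succ_ne_zero (hV i))
      (Ideal.mul_mem_left _ (i.val.factorial : MvPolynomial (Fin n) F)
        (MvPolynomial.sub_C_eval_zero_mem_idealOfVars (Q.coeff i)))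
    rwa [sub_add_cancel] at this
  have hcoeff : ∀ i < d + 1, ∃ c ∈ Algebra.adjoin F (Set.range V), Q.coeff i - c ∈ I ^ (d + 1) :=
    fun i hi => ⟨algebraMap F _ (MvPolynomial.eval 0 (Q.coeff i)) + (i.factorial : F)⁻¹ • V ⟨i, hi⟩,
      add_mem (Subalgebra.algebraMap_mem _ _)
        (Subalgebra.smul_mem _ (Algebra.subset_adjoin (Set.mem_range_self _)) _), by
      rw [MvPolynomial.algebraMap_eq, ← sub_sub]
      exact sub_inv_natCast_smul_mem_of_sub_natCast_mul_mem
        (Nat.cast_ne_zero.mpr i.factorial_ne_zero) (hV ⟨i, hi⟩)⟩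
  have hQS : Q.eval (R - MvPolynomial.C (MvPolynomial.eval 0 R)) = 0 := by
    rw [Polynomial.eval_map_of_apply_eq _ _ (Polynomial.eval_C (x := MvPolynomial.C κ)),
      Polynomial.taylor_eval, ← Polynomial.C_add, sub_add_cancel, hroot, map_zero]
  have hγ : MvPolynomial.eval 0 (Q.coeff 1) ≠ 0 := by
    rwa [Polynomial.coeff_map, Polynomial.taylor_coeff, Polynomial.hasseDeriv_one,
      Polynomial.coe_evalRingHom, ← Polynomial.eval_map_of_apply_eq _ _ (MvPolynomial.eval_C κ)]
  obtain ⟨c, hc, hSc⟩ := Polynomial.exists_mem_sub_mem_pow_of_eval_eq_zero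
    (Algebra.adjoin F (Set.range V)) hcoeff hγ
    (by simpa using MvPolynomial.sub_C_eval_zero_mem_idealOfVars (Q.coeff 1))
    (MvPolynomial.sub_C_eval_zero_mem_idealOfVars R) hQS
  obtain ⟨Q', hdeg, hQ'⟩ := exists_totalDegree_le_sub_aeval_mem_pow hVI hc d
  refine ⟨κ, Q' + MvPolynomial.C (MvPolynomial.eval 0 R),
    (MvPolynomial.totalDegree_add _ _).trans (by simpa using hdeg), ?_⟩
  convert add_mem hSc hQ' using 1
  simp only [map_add, MvPolynomial.aeval_C, MvPolynomial.algebraMap_eq, V]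
  ring

theorem stmt_5 {F : Type*} [Field F] [CharZero F] {n : ℕ} (d : ℕ)
    (P : Polynomial (Polynomial (MvPolynomial (Fin n) F)))
    (R : MvPolynomial (Fin n) F) (hRdeg : R.totalDegree ≤ d)
    -- `P(T, x, R(x)) ≡ 0`:
    (hroot : P.eval (Polynomial.C R) = 0)
    -- `(∂P/∂y)(T, 0, R(0))` is a nonzero polynomial in `F[T]`:
    (hnd : (((Polynomial.derivative P).eval
        (Polynomial.C (MvPolynomial.C (MvPolynomial.eval (0 : Fin n → F) R)))).map
        (MvPolynomial.eval (0 : Fin n → F))) ≠ 0)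
    -- `h i = ((∂^i P/∂y^i)(T, x, R(0)) − (∂^i P/∂y^i)(T, 0, R(0))) trunc ⟨x⟩^{d+1}`:
    (h : ℕ → Polynomial (MvPolynomial (Fin n) F))
    (hh : ∀ i : ℕ, h i = polyTruncX d
      ((((fun q => Polynomial.derivative q)^[i] P).eval
          (Polynomial.C (MvPolynomial.C (MvPolynomial.eval (0 : Fin n → F) R)))) -
        ((((fun q => Polynomial.derivative q)^[i] P).eval
            (Polynomial.C (MvPolynomial.C (MvPolynomial.eval (0 : Fin n → F) R)))).map
          ((MvPolynomial.C : F →+* MvPolynomial (Fin n) F).comp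
            (MvPolynomial.eval (0 : Fin n → F)))))) :
    ∃ (κ : F) (Q : MvPolynomial (Fin (d + 1)) F), Q.totalDegree ≤ d ∧
      R - MvPolynomial.aeval
          (fun i : Fin (d + 1) => Polynomial.eval (MvPolynomial.C κ) (h i)) Q ∈
        (Ideal.span (Set.range (MvPolynomial.X : Fin n → MvPolynomial (Fin n) F))) ^ (d + 1) :=
  stmt_5_general d P R hroot hnd h hh
end
end

section
/- With P, D, F̄, and the power series roots φ_1, …, φ_D as in the setup, let k > deg_T P. Then for every polynomial G ∈ F̄[T, x, z] that is monic in z and divides P in F̄[T, x, z], there is a subset U ⊆ {1, …, D} such that ∏_{i∈U} (z − φ_i(T, x)) is in fact a polynomial (not merely a power series in T) equal to G; consequently G = (∏_{i∈U} (z − φ_i(T, x))) trunc T^k. -/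
/-!
Lemma `factors-as-prod-of-roots`: every monic factor of `P(T, x, z)` is a
subproduct of `(z − φ_i(T, x))` over the power series roots, and hence equals
its own truncation `trunc T^k` for `k > deg_T P`.

`P ∈ F[T, x, z]` is represented as `Polynomial (Polynomial (MvPolynomial (Fin n) F))`,
with `z` the outer variable and `T` the inner one.  `F̄[x][[T]][z]` is
`Polynomial (PowerSeries (MvPolynomial (Fin n) (AlgebraicClosure F)))`.
-/

noncomputable section

/-- `F̄[x]`. -/
abbrev MvK (F : Type*) [Field F] (n : ℕ) := MvPolynomial (Fin n) (AlgebraicClosure F)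

/-- Coefficient extension `F[T, x, z] → F̄[T, x, z]`. -/
def liftTXZ (F : Type*) [Field F] (n : ℕ) :
    Polynomial (Polynomial (MvPolynomial (Fin n) F)) →+* Polynomial (Polynomial (MvK F n)) :=
  Polynomial.mapRingHom (Polynomial.mapRingHom
    (MvPolynomial.map (algebraMap F (AlgebraicClosure F))))

/-- Inclusion `F̄[T, x, z] = F̄[x][T][z] → F̄[x][[T]][z]`. -/
def liftPS (F : Type*) [Field F] (n : ℕ) :
    Polynomial (Polynomial (MvK F n)) →+* Polynomial (PowerSeries (MvK F n)) :=
  Polynomial.mapRingHom (Polynomial.coeToPowerSeries.ringHom)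

/-- Coefficientwise truncation `trunc T^k : F̄[x][[T]][z] → F̄[x][T][z]`. -/
def truncPow {A : Type*} [CommSemiring A] (k : ℕ) (q : Polynomial (PowerSeries A)) :
    Polynomial (Polynomial A) :=
  ∑ j ∈ q.support, Polynomial.monomial j (PowerSeries.trunc k (q.coeff j))

/-!
Over the fraction field of `F̄[x][[T]]` the image of `G` divides the split polynomial
`∏ (z − φ_i)`, so its roots form a sub-multiset of the `φ_i` and `G` is the corresponding
subproduct. Swapping `T` and `z` turns `G ∣ P` into a divisibility in `F̄[x][z][T]`, where
`T`-degrees cannot grow along a divisor; hence every coefficient of `G` has `T`-degree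
`< k`, and truncation at `T^k` leaves `G` unchanged.
-/

open Polynomial

namespace Multiset

theorem exists_le_map_eq_of_le_map {α β : Type*} [DecidableEq α] [DecidableEq β] (f : α → β)
    {s : Multiset α} {t : Multiset β} (h : t ≤ s.map f) : ∃ u ≤ s, u.map f = t := by
  induction s using Multiset.induction_on generalizing t with
  | empty => exact ⟨0, le_rfl, (by simpa using h : t = 0).symm⟩
  | cons a s ih =>
    rw [map_cons] at h
    by_cases ha : f a ∈ t
    · obtain ⟨u, hus, hu⟩ := ih (erase_le_iff_le_cons.mpr h)
      exact ⟨a ::ₘ u, cons_le_cons a hus, by rw [map_cons, hu, cons_erase ha]⟩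
    · obtain ⟨u, hus, hu⟩ := ih ((le_cons_of_notMem ha).mp h)
      exact ⟨u, hus.trans (le_cons_self s a), hu⟩

end Multiset

namespace Polynomial

theorem exists_subset_eq_prod_X_sub_C_of_monic_dvd {R ι : Type*} [CommRing R] [IsDomain R]
    {s : Finset ι} {φ : ι → R} {G : R[X]} (hG : G.Monic)
    (hdvd : G ∣ ∏ i ∈ s, (X - C (φ i))) : ∃ U ⊆ s, G = ∏ i ∈ U, (X - C (φ i)) := by
  classical
  let K := FractionRing R
  let toK : R →+* K := algebraMap R K
  have htoK : Function.Injective toK := IsFractionRing.injective R K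
  set Q : K[X] := ∏ i ∈ s, (X - C (toK (φ i)))
  have hQ0 : Q ≠ 0 := (monic_prod_of_monic _ _ fun i _ => monic_X_sub_C _).ne_zero
  have hdvdK : G.map toK ∣ Q := by
    simpa [Q, Polynomial.map_prod] using Polynomial.map_dvd toK hdvd
  have hroots : (G.map toK).roots ≤ s.val.map (toK ∘ φ) := by
    have hQ : Q = ((s.val.map (toK ∘ φ)).map fun a => X - C a).prod := by
      rw [Multiset.map_map]; rfl
    rw [← roots_multiset_prod_X_sub_C (s.val.map (toK ∘ φ)), ← hQ]
    exact roots.le_of_dvd hQ0 hdvdK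
  have hsplits : (G.map toK).Splits :=
    (Splits.prod fun i _ => Splits.X_sub_C (toK (φ i))).of_dvd hQ0 hdvdK
  obtain ⟨u, hus, hu⟩ := Multiset.exists_le_map_eq_of_le_map _ hroots
  refine ⟨⟨u, Multiset.nodup_of_le hus s.nodup⟩, Multiset.subset_of_le hus, map_injective toK htoK ?_⟩
  rw [hsplits.eq_prod_roots_of_monic (hG.map toK), ← hu, Polynomial.map_prod, Multiset.map_map]
  simp [Finset.prod_eq_multiset_prod]

namespace Bivariate

theorem coeff_coeff_swap {R : Type*} [CommSemiring R] (p : R[X][Y]) (i j : ℕ) :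
    ((swap p).coeff i).coeff j = (p.coeff j).coeff i := by
  induction p using Polynomial.induction_on' with
  | add p q hp hq => simp only [map_add, coeff_add, hp, hq]
  | monomial m a =>
    induction a using Polynomial.induction_on' with
    | add a b ha hb => simp only [map_add, coeff_add, ha, hb]
    | monomial l r =>
      simp only [swap_monomial_monomial, coeff_monomial]
      split_ifs <;> simp_all [coeff_monomial]

theorem degree_swap_lt_iff {R : Type*} [CommSemiring R] {p : R[X][Y]} {k : ℕ} :
    (swap p).degree < k ↔ ∀ i, (p.coeff i).degree < k := by
  simp only [degree_lt_iff_coeff_zero, Polynomial.ext_iff, coeff_coeff_swap, coeff_zero]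
  exact ⟨fun h i m hm => h m hm i, fun h m hm i => h i m hm⟩

end Bivariate

open Bivariate in
theorem degree_coeff_lt_of_dvd {R : Type*} [CommRing R] [IsDomain R] {G P : R[X][X]}
    (hP : P ≠ 0) (hdvd : G ∣ P) {k : ℕ} (hk : ∀ i, (P.coeff i).degree < k) (j : ℕ) :
    (G.coeff j).degree < k :=
  degree_swap_lt_iff.mp ((degree_le_of_dvd (_root_.map_dvd swap hdvd)
    (swap.injective.ne_iff' (map_zero _) |>.mpr hP)).trans_lt (degree_swap_lt_iff.mpr hk)) j

end Polynomial

theorem truncPow_map_coe {A : Type*} [CommSemiring A] {k : ℕ} {G : Polynomial (Polynomial A)}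
    (hG : ∀ j, (G.coeff j).degree < k) :
    truncPow k (G.map coeToPowerSeries.ringHom) = G := by
  rw [truncPow, support_map_of_injective _ (coe_injective A)]
  conv_rhs => rw [G.as_sum_support]
  refine Finset.sum_congr rfl fun j hj => ?_
  rw [coeff_map, coeToPowerSeries.ringHom_apply,
    PowerSeries.trunc_coe_eq_self ((natDegree_lt_iff_degree_lt (mem_support_iff.mp hj)).mpr (hG j))]

theorem stmt_6_general {F : Type*} [Field F] {n : ℕ}
    (P : Polynomial (Polynomial (MvPolynomial (Fin n) F)))
    -- `P = ∏ (z − φ_i)` in `F̄[x][[T]][z]`, with `D = deg_z P`: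
    (D : ℕ)
    (φ : Fin D → PowerSeries (MvK F n))
    (hfact : liftPS F n (liftTXZ F n P) =
      ∏ i : Fin D, (Polynomial.X - Polynomial.C (φ i)))
    -- `k > deg_T P`:
    (k : ℕ) (hk : ∀ i : ℕ, (P.coeff i).degree < (k : ℕ))
    -- `G ∈ F̄[T, x, z]` monic in `z`, dividing `P`:
    (G : Polynomial (Polynomial (MvK F n)))
    (hGmonic : G.Monic) (hGdvd : G ∣ liftTXZ F n P) :
    ∃ U : Finset (Fin D),
      liftPS F n G = ∏ i ∈ U, (Polynomial.X - Polynomial.C (φ i)) ∧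
      G = truncPow (A := MvK F n) k (∏ i ∈ U, (Polynomial.X - Polynomial.C (φ i))) := by
  have hP : liftTXZ F n P ≠ 0 := fun h =>
    (monic_prod_of_monic _ _ fun i _ => monic_X_sub_C (φ i)).ne_zero (by rw [← hfact, h, map_zero])
  have hkP : ∀ i, ((liftTXZ F n P).coeff i).degree < k := fun i => by
    simpa only [liftTXZ, coe_mapRingHom, coeff_map] using degree_map_le.trans_lt (hk i)
  obtain ⟨U, -, hU⟩ := exists_subset_eq_prod_X_sub_C_of_monic_dvd (hGmonic.map _)
    (hfact ▸ map_dvd (liftPS F n) hGdvd)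
  refine ⟨U, hU, ?_⟩
  rw [← hU]
  exact (truncPow_map_coe (degree_coeff_lt_of_dvd hP hGdvd hkP)).symm

theorem stmt_6 {F : Type*} [Field F] {n : ℕ}
    (P : Polynomial (Polynomial (MvPolynomial (Fin n) F)))
    (hP0 : P ≠ 0) (hsqf : Squarefree P)
    -- `P` is monic in `z`:
    (hmonic : ∃ c : F, c ≠ 0 ∧ P.leadingCoeff = Polynomial.C (MvPolynomial.C c))
    -- `P(0, x, z) = P(0, 0, z) ∈ F[z]` (this is `T`-regularity) and it is squarefree:
    (p₀ : Polynomial F)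
    (hreg : P.map (Polynomial.evalRingHom (0 : MvPolynomial (Fin n) F)) =
      p₀.map (MvPolynomial.C : F →+* MvPolynomial (Fin n) F))
    (hp₀sqf : Squarefree p₀)
    -- `P = ∏ (z − φ_i)` in `F̄[x][[T]][z]`, with `D = deg_z P`:
    (D : ℕ) (hD : D = P.natDegree)
    (φ : Fin D → PowerSeries (MvK F n))
    (hfact : liftPS F n (liftTXZ F n P) =
      ∏ i : Fin D, (Polynomial.X - Polynomial.C (φ i)))
    -- `k > deg_T P`:
    (k : ℕ) (hk : ∀ i : ℕ, (P.coeff i).degree < (k : ℕ))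
    -- `G ∈ F̄[T, x, z]` monic in `z`, dividing `P`:
    (G : Polynomial (Polynomial (MvK F n)))
    (hGmonic : G.Monic) (hGdvd : G ∣ liftTXZ F n P) :
    ∃ U : Finset (Fin D),
      liftPS F n G = ∏ i ∈ U, (Polynomial.X - Polynomial.C (φ i)) ∧
      G = truncPow (A := MvK F n) k (∏ i ∈ U, (Polynomial.X - Polynomial.C (φ i))) :=
  stmt_6_general P D φ hfact k hk G hGmonic hGdvd
end
end

section
/- With P, D, F̄, the power series roots φ_1, …, φ_D, and α_i := φ_i(0, 0) as in the setup, fix any k ≥ 0 and for S ⊆ {1, …, D} let Q_S(T, x, z) := (∏_{i∈S} (z − φ_i(T, x))) trunc T^k. If the univariate polynomial g_S(z) := ∏_{i∈S} (z − α_i) = Q_S(0, 0, z) has all its coefficients in the base field F, then Q_S(T, x, z) has all its coefficients in F, i.e., Q_S ∈ F[T, x, z]. -/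
/-!
Put `Φ_S := ∏_{i ∈ S} (z - φ_i)`, so that `Φ_S * Φ_Sᶜ = P` has all its `T`-coefficients in
`F[x][z]`. The roots `φ_i(0, x)` of `P(0, x, z) = P(0, 0, z)` are constants, so at `T = 0` the
two factors are `g_S` and `g_Sᶜ`; both are defined over `F`, and they are coprime because
`P(0, 0, z)` is squarefree. For `m > 0` the coefficient of `T ^ m` in `Φ_S * Φ_Sᶜ` reads
`A * g_Sᶜ + g_S * B = E` with `A, B` the `T ^ m`-coefficients of `Φ_S, Φ_Sᶜ` and `E` built from
`P` and lower coefficients, while `deg A < deg g_S` since `Φ_S` is monic. Such a solution is unique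
by coprimality, and one exists over `F[x]`, so by induction on `m` every `T`-coefficient of `Φ_S`
is defined over `F`.
-/

noncomputable section

open Polynomial Finset

theorem coeff_sum_support_monomial {A B : Type*} [Semiring A] [Semiring B] (q : A[X]) (f : A → B)
    (hf : f 0 = 0) (j : ℕ) :
    (∑ i ∈ q.support, monomial i (f (q.coeff i))).coeff j = f (q.coeff j) := by
  rw [finsetSum_coeff]
  simp only [coeff_monomial]
  rw [Finset.sum_ite_eq']
  split_ifs with hj
  · rfl
  · rw [notMem_support_iff.mp hj, hf]

section CoeffT

variable {A : Type*} [CommSemiring A]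

theorem coeff_truncPow (k : ℕ) (q : (PowerSeries A)[X]) (j : ℕ) :
    (truncPow k q).coeff j = PowerSeries.trunc k (q.coeff j) :=
  coeff_sum_support_monomial q _ (map_zero _) j

def coeffT (m : ℕ) (q : (PowerSeries A)[X]) : A[X] :=
  ∑ j ∈ q.support, monomial j (PowerSeries.coeff m (q.coeff j))

@[simp] theorem coeff_coeffT (m : ℕ) (q : (PowerSeries A)[X]) (j : ℕ) :
    (coeffT m q).coeff j = PowerSeries.coeff m (q.coeff j) :=
  coeff_sum_support_monomial q _ (map_zero _) j

theorem coeffT_zero (q : (PowerSeries A)[X]) : coeffT 0 q = q.map PowerSeries.constantCoeff := by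
  ext j
  simp [PowerSeries.coeff_zero_eq_constantCoeff]

theorem coeffT_mul (m : ℕ) (p q : (PowerSeries A)[X]) :
    coeffT m (p * q) = ∑ ab ∈ antidiagonal m, coeffT ab.1 p * coeffT ab.2 q := by
  ext j
  simp only [coeff_coeffT, coeff_mul, map_sum, PowerSeries.coeff_mul, finsetSum_coeff]
  exact Finset.sum_comm

theorem coeffT_succ_mul (m : ℕ) (p q : (PowerSeries A)[X]) :
    coeffT (m + 1) (p * q) = coeffT (m + 1) p * coeffT 0 q + coeffT 0 p * coeffT (m + 1) q +
      ∑ i ∈ range m, coeffT (i + 1) p * coeffT (m - i) q := by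
  rw [coeffT_mul, Finset.Nat.sum_antidiagonal_eq_sum_range_succ_mk, Finset.sum_range_succ,
    Finset.sum_range_succ']
  simp only [Nat.sub_self, Nat.sub_zero, Nat.reduceSubDiff]
  ring

theorem degree_coeffT_lt [Nontrivial A] {Q : (PowerSeries A)[X]} (hQ : Q.Monic) {m : ℕ}
    (hm : m ≠ 0) : (coeffT m Q).degree < (coeffT 0 Q).degree := by
  rw [coeffT_zero, degree_eq_natDegree (hQ.map _).ne_zero, hQ.natDegree_map,
    degree_lt_iff_coeff_zero]
  intro j hj
  rw [coeff_coeffT]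
  rcases hj.lt_or_eq with hj | rfl
  · rw [coeff_eq_zero_of_natDegree_lt (by exact_mod_cast hj), map_zero]
  · rw [hQ.coeff_natDegree, PowerSeries.coeff_one, if_neg hm]

end CoeffT

theorem coeffT_zero_prod_X_sub_C {R ι : Type*} [CommRing R] (s : Finset ι)
    (φ : ι → PowerSeries R) :
    coeffT 0 (∏ i ∈ s, (X - C (φ i) : (PowerSeries R)[X])) =
      ∏ i ∈ s, (X - C (PowerSeries.constantCoeff (φ i))) := by
  simp [coeffT_zero, Polynomial.map_prod]

section Coprime

variable {R : Type*} [CommRing R] {g h : R[X]}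

theorem exists_mul_add_mul_eq_of_isCoprime [Nontrivial R] (hg : g.Monic) (hgh : IsCoprime g h)
    (E : R[X]) :
    ∃ A B : R[X], A * h + g * B = E ∧ A.degree < g.degree := by
  obtain ⟨a, b, hab⟩ := hgh
  refine ⟨(b * E) %ₘ g, a * E + (b * E) /ₘ g * h, ?_, degree_modByMonic_lt _ hg⟩
  linear_combination h * modByMonic_add_div (b * E) g + E * hab

theorem eq_of_mul_add_mul_eq (hg : g.Monic) (hgh : IsCoprime g h) {A B A' B' : R[X]}
    (heq : A * h + g * B = A' * h + g * B') (hA : A.degree < g.degree)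
    (hA' : A'.degree < g.degree) : A = A' ∧ B = B' := by
  have hdvd : g ∣ (A - A') * h := ⟨B' - B, by linear_combination heq⟩
  have hAA' : A = A' := by
    by_contra hne
    exact hg.not_dvd_of_degree_lt (sub_ne_zero.mpr hne)
      ((degree_sub_le _ _).trans_lt (max_lt hA hA')) (hgh.dvd_of_dvd_mul_right hdvd)
  refine ⟨hAA', ?_⟩
  rw [← sub_eq_zero, ← hg.mul_right_eq_zero_iff]
  linear_combination heq - h * hAA'

theorem mem_liftsRing_of_mul_add_mul_mem [Nontrivial R] {R' : Type*} [CommRing R'] [Nontrivial R']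
    (σ : R →+* R') (hg : g.Monic) (hgh : IsCoprime g h) {A B : R'[X]}
    (hAB : A * h.map σ + g.map σ * B ∈ liftsRing σ) (hA : A.degree < (g.map σ).degree) :
    A ∈ liftsRing σ ∧ B ∈ liftsRing σ := by
  obtain ⟨E, hE⟩ := hAB
  obtain ⟨A₀, B₀, hE₀, hA₀⟩ := exists_mul_add_mul_eq_of_isCoprime hg hgh E
  have hdeg : (A₀.map σ).degree < (g.map σ).degree :=
    degree_map_le.trans_lt (hA₀.trans_eq (hg.degree_map σ).symm)
  have hE' : A₀.map σ * h.map σ + g.map σ * B₀.map σ = A * h.map σ + g.map σ * B := by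
    rw [← hE, ← hE₀, coe_mapRingHom, Polynomial.map_add, Polynomial.map_mul,
      Polynomial.map_mul]
  obtain ⟨hA₀A, hB₀B⟩ :=
    eq_of_mul_add_mul_eq (hg.map σ) (hgh.map (mapRingHom σ)) hE' hdeg hA
  exact ⟨⟨A₀, hA₀A⟩, ⟨B₀, hB₀B⟩⟩

end Coprime

theorem coeffT_mem_liftsRing_of_mul {R R' : Type*} [CommRing R] [Nontrivial R] [CommRing R']
    [Nontrivial R'] (σ : R →+* R') {g h : R[X]} (hg : g.Monic) (hgh : IsCoprime g h)
    {Q Q' : (PowerSeries R')[X]} (hQ : Q.Monic) (hQ0 : coeffT 0 Q = g.map σ)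
    (hQ'0 : coeffT 0 Q' = h.map σ) (hprod : ∀ m, coeffT m (Q * Q') ∈ liftsRing σ) (m : ℕ) :
    coeffT m Q ∈ liftsRing σ ∧ coeffT m Q' ∈ liftsRing σ := by
  induction m using Nat.strong_induction_on with
  | _ m ih =>
  cases m with
  | zero => exact ⟨⟨g, hQ0.symm⟩, ⟨h, hQ'0.symm⟩⟩
  | succ m =>
    have hrest : ∑ i ∈ range m, coeffT (i + 1) Q * coeffT (m - i) Q' ∈ liftsRing σ :=
      sum_mem fun i hi => mul_mem (ih _ (by simp at hi; omega)).1 (ih _ (by omega)).2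
    refine mem_liftsRing_of_mul_add_mul_mem σ hg hgh ?_ ?_
    · have hm := sub_mem (hprod (m + 1)) hrest
      rwa [coeffT_succ_mul, hQ0, hQ'0, add_sub_cancel_right] at hm
    · exact hQ0 ▸ degree_coeffT_lt hQ m.succ_ne_zero

theorem truncPow_mem_liftsRing {R R' : Type*} [CommRing R] [CommRing R'] (σ : R →+* R')
    {q : (PowerSeries R')[X]} (hq : ∀ m, coeffT m q ∈ liftsRing σ) (k : ℕ) :
    truncPow k q ∈ liftsRing (mapRingHom σ) := by
  rw [← lifts_iff_liftsRing, lifts_iff_coeff_lifts]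
  intro j
  suffices PowerSeries.trunc k (q.coeff j) ∈ lifts σ by
    rw [coeff_truncPow]
    exact (mem_lifts _).1 this
  rw [lifts_iff_coeff_lifts]
  intro m
  rw [PowerSeries.coeff_trunc]
  split_ifs
  · rw [← coeff_coeffT]
    exact (lifts_iff_coeff_lifts _).1 ((lifts_iff_liftsRing _ _).2 (hq m)) j
  · exact ⟨0, map_zero σ⟩

theorem exists_isCoprime_map_eq_of_squarefree {F K : Type*} [Field F] [Field K] (f : F →+* K)
    {p : F[X]} (hp : Squarefree p) {a b : K[X]} (hab : p.map f = a * b) (ha : a.Monic)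
    (ha' : a ∈ lifts f) :
    ∃ g h : F[X], g.Monic ∧ IsCoprime g h ∧ g.map f = a ∧ h.map f = b := by
  obtain ⟨g, rfl⟩ := (mem_lifts a).1 ha'
  obtain ⟨h, rfl⟩ : g ∣ p := by
    rw [← map_dvd_map' f, hab]
    exact dvd_mul_right _ _
  refine ⟨g, h, monic_of_injective f.injective ha, (squarefree_mul_iff.1 hp).1.isCoprime, rfl,
    ?_⟩
  rw [Polynomial.map_mul] at hab
  exact mul_left_cancel₀ ha.ne_zero hab

theorem eq_of_prod_X_sub_C_eq_map {R K ι : Type*} [CommRing R] [IsDomain R] [CommRing K]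
    (i : K →+* R) (e : R →+* K) (hei : Function.LeftInverse e i) {s : Finset ι} {ψ : ι → R}
    {f : K[X]} (hf : ∏ j ∈ s, (X - C (ψ j)) = f.map i) {j : ι} (hj : j ∈ s) :
    ψ j = i (e (ψ j)) := by
  have hfe : ∏ l ∈ s, (X - C (e (ψ l))) = f := by
    have hei' : e.comp i = RingHom.id K := RingHom.ext hei
    simpa [Polynomial.map_prod, Polynomial.map_map, hei'] using congrArg (map e) hf
  have hroot : (∏ l ∈ s, (X - C (i (e (ψ l))))).eval (ψ j) = 0 := by
    have : ∏ l ∈ s, (X - C (i (e (ψ l)))) = ∏ l ∈ s, (X - C (ψ l)) := by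
      rw [hf, ← hfe, Polynomial.map_prod]
      simp
    rw [this, eval_prod]
    exact prod_eq_zero hj (by simp)
  obtain ⟨l, -, hl⟩ := prod_eq_zero_iff.1 (by simpa [eval_prod] using hroot)
  rw [sub_eq_zero] at hl
  have hel : e (ψ j) = e (ψ l) := by
    rw [hl, hei]
  rw [hel, ← hl]

theorem coeff_coeffT_liftPS_liftTXZ {F : Type*} [Field F] {n : ℕ}
    (P : Polynomial (Polynomial (MvPolynomial (Fin n) F))) (m j : ℕ) :
    (coeffT m (liftPS F n (liftTXZ F n P))).coeff j =
      MvPolynomial.map (algebraMap F (AlgebraicClosure F)) ((P.coeff j).coeff m) := by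
  simp [liftPS, liftTXZ]

theorem coeffT_liftPS_liftTXZ_mem_liftsRing {F : Type*} [Field F] {n : ℕ}
    (P : Polynomial (Polynomial (MvPolynomial (Fin n) F))) (m : ℕ) :
    coeffT m (liftPS F n (liftTXZ F n P)) ∈
      liftsRing (MvPolynomial.map (σ := Fin n) (algebraMap F (AlgebraicClosure F))) :=
  (lifts_iff_liftsRing _ _).1 <|
    (lifts_iff_coeff_lifts _).2 fun j => ⟨_, (coeff_coeffT_liftPS_liftTXZ P m j).symm⟩

theorem map_C_map_eq_map_map_C {F K : Type*} [Field F] [CommRing K] (f : F →+* K) {n : ℕ}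
    (q : F[X]) : (q.map f).map MvPolynomial.C =
      (q.map (MvPolynomial.C : F →+* MvPolynomial (Fin n) F)).map (MvPolynomial.map f) := by
  rw [Polynomial.map_map, Polynomial.map_map, MvPolynomial.map_comp_C]

theorem coeffT_zero_liftPS_liftTXZ {F : Type*} [Field F] {n : ℕ}
    {P : Polynomial (Polynomial (MvPolynomial (Fin n) F))} {p₀ : F[X]}
    (hreg : P.map (Polynomial.evalRingHom 0) = p₀.map MvPolynomial.C) :
    coeffT 0 (liftPS F n (liftTXZ F n P)) =
      (p₀.map (algebraMap F (AlgebraicClosure F))).map MvPolynomial.C := by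
  ext j : 1
  rw [coeff_coeffT_liftPS_liftTXZ, coeff_zero_eq_eval_zero, map_C_map_eq_map_map_C, ← hreg,
    coeff_map, coeff_map, coe_evalRingHom]

theorem stmt_7_general {F : Type*} [Field F] {n : ℕ}
    (P : Polynomial (Polynomial (MvPolynomial (Fin n) F)))
    -- `P(0, x, z) = P(0, 0, z) ∈ F[z]` (this is `T`-regularity) and it is squarefree:
    (p₀ : Polynomial F)
    (hreg : P.map (Polynomial.evalRingHom (0 : MvPolynomial (Fin n) F)) =
      p₀.map (MvPolynomial.C : F →+* MvPolynomial (Fin n) F))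
    (hp₀sqf : Squarefree p₀)
    -- `P = ∏ (z − φ_i)` in `F̄[x][[T]][z]`, with `D = deg_z P`:
    (D : ℕ)
    (φ : Fin D → PowerSeries (MvK F n))
    (hfact : liftPS F n (liftTXZ F n P) =
      ∏ i : Fin D, (Polynomial.X - Polynomial.C (φ i)))
    -- `α_i = φ_i(0, 0)`:
    (α : Fin D → AlgebraicClosure F)
    (hα : ∀ i, α i = MvPolynomial.eval (0 : Fin n → AlgebraicClosure F)
      (PowerSeries.constantCoeff (φ i)))
    (k : ℕ) (S : Finset (Fin D))
    -- all coefficients of `g_S(z) = ∏_{i ∈ S} (z − α_i)` lie in `F`: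
    (hgS : ∀ j : ℕ, (∏ i ∈ S, (Polynomial.X - Polynomial.C (α i))).coeff j ∈
      (algebraMap F (AlgebraicClosure F)).range) :
    -- then `Q_S = (∏_{i ∈ S} (z − φ_i)) trunc T^k` has all its coefficients in `F`:
    ∃ Q' : Polynomial (Polynomial (MvPolynomial (Fin n) F)),
      liftTXZ F n Q' = truncPow (A := MvK F n) k (∏ i ∈ S, (Polynomial.X - Polynomial.C (φ i))) := by
  set ι := algebraMap F (AlgebraicClosure F)
  have hconst := coeffT_zero_liftPS_liftTXZ hreg
  rw [hfact, coeffT_zero_prod_X_sub_C] at hconst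
  have hφ0 : ∀ i, PowerSeries.constantCoeff (φ i) = MvPolynomial.C (α i) := fun i =>
    (hα i).symm ▸ eq_of_prod_X_sub_C_eq_map MvPolynomial.C (MvPolynomial.eval 0)
      (fun c => MvPolynomial.eval_C c) hconst (mem_univ i)
  have hQ0 : ∀ s, coeffT 0 (∏ i ∈ s, (X - C (φ i)) : (PowerSeries (MvK F n))[X]) =
      (∏ i ∈ s, (X - C (α i))).map MvPolynomial.C := by
    simp [coeffT_zero_prod_X_sub_C, hφ0, Polynomial.map_prod]
  have hp₀ : p₀.map ι = ∏ i, (X - C (α i)) := by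
    refine map_injective _ (MvPolynomial.C_injective (Fin n) _) ?_
    rw [← hconst, Polynomial.map_prod]
    simp [hφ0]
  obtain ⟨g, h, hg, hgh, hgS', hgSc'⟩ := exists_isCoprime_map_eq_of_squarefree ι hp₀sqf
    (hp₀.trans (prod_mul_prod_compl S _).symm)
    (monic_prod_of_monic _ _ fun i _ => monic_X_sub_C _)
    ((lifts_iff_coeff_lifts _).2 hgS)
  have hQS := coeffT_mem_liftsRing_of_mul (MvPolynomial.map ι) (hg.map MvPolynomial.C)
    (hgh.map (mapRingHom (MvPolynomial.C : F →+* MvPolynomial (Fin n) F)))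
    (Q := ∏ i ∈ S, (X - C (φ i))) (Q' := ∏ i ∈ Sᶜ, (X - C (φ i)))
    (h := h.map MvPolynomial.C)
    (monic_prod_of_monic _ _ fun i _ => monic_X_sub_C (φ i))
    (by rw [hQ0, ← hgS', map_C_map_eq_map_map_C]) (by rw [hQ0, ← hgSc', map_C_map_eq_map_map_C])
    (by rw [prod_mul_prod_compl, ← hfact]; exact coeffT_liftPS_liftTXZ_mem_liftsRing P)
  obtain ⟨Q', hQ'⟩ := truncPow_mem_liftsRing _ (fun m => (hQS m).1) k
  exact ⟨Q', hQ'⟩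

theorem stmt_7 {F : Type*} [Field F] {n : ℕ}
    (P : Polynomial (Polynomial (MvPolynomial (Fin n) F)))
    (hP0 : P ≠ 0) (hsqf : Squarefree P)
    -- `P` is monic in `z`:
    (hmonic : ∃ c : F, c ≠ 0 ∧ P.leadingCoeff = Polynomial.C (MvPolynomial.C c))
    -- `P(0, x, z) = P(0, 0, z) ∈ F[z]` (this is `T`-regularity) and it is squarefree:
    (p₀ : Polynomial F)
    (hreg : P.map (Polynomial.evalRingHom (0 : MvPolynomial (Fin n) F)) =
      p₀.map (MvPolynomial.C : F →+* MvPolynomial (Fin n) F))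
    (hp₀sqf : Squarefree p₀)
    -- `P = ∏ (z − φ_i)` in `F̄[x][[T]][z]`, with `D = deg_z P`:
    (D : ℕ) (hD : D = P.natDegree)
    (φ : Fin D → PowerSeries (MvK F n))
    (hfact : liftPS F n (liftTXZ F n P) =
      ∏ i : Fin D, (Polynomial.X - Polynomial.C (φ i)))
    -- `α_i = φ_i(0, 0)`:
    (α : Fin D → AlgebraicClosure F)
    (hα : ∀ i, α i = MvPolynomial.eval (0 : Fin n → AlgebraicClosure F)
      (PowerSeries.constantCoeff (φ i)))
    (k : ℕ) (S : Finset (Fin D))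
    -- all coefficients of `g_S(z) = ∏_{i ∈ S} (z − α_i)` lie in `F`:
    (hgS : ∀ j : ℕ, (∏ i ∈ S, (Polynomial.X - Polynomial.C (α i))).coeff j ∈
      (algebraMap F (AlgebraicClosure F)).range) :
    -- then `Q_S = (∏_{i ∈ S} (z − φ_i)) trunc T^k` has all its coefficients in `F`:
    ∃ Q' : Polynomial (Polynomial (MvPolynomial (Fin n) F)),
      liftTXZ F n Q' = truncPow (A := MvK F n) k (∏ i ∈ S, (Polynomial.X - Polynomial.C (φ i))) :=
  stmt_7_general P p₀ hreg hp₀sqf D φ hfact α hα k S hgS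
end
end

section
/- Let G(T, x, z) ∈ ℚ[T, x, z] be an irreducible polynomial that is monic in z, with T-degree at most D and z-degree exactly D_z. Let K be a field extension of ℚ and let φ(T, x) ∈ K[T, x] be an approximate root of G of order 2D·D_z + 1, i.e., G(T, x, φ(T, x)) ≡ 0 mod T^{2D·D_z + 1}. Suppose B(T, z) ∈ ℚ(x)[T, z] is monic in z, has T-degree at most D and z-degree exactly D_z, and satisfies B(T, φ(T, x)) ≡ 0 mod T^{2D·D_z + 1} (after substituting z := φ(T, x), viewing all coefficients in K(x)). Then B ≡ G, i.e., B equals G viewed as an element of ℚ(x)[T, z]. -/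
/-!
Lemma `unique-minimal-polynomial`: a monic-in-`z` polynomial `B(T, z) ∈ ℚ(x)[T, z]`
of `T`-degree at most `D` and `z`-degree exactly `D_z` that annihilates an
approximate root `φ` of the irreducible polynomial `G(T, x, z)` to order
`2·D·D_z + 1` must equal `G`.

`G ∈ ℚ[T, x, z]` is represented as `Polynomial (Polynomial (MvPolynomial (Fin n) ℚ))`,
with `z` the outer variable and `T` the inner one; `B ∈ ℚ(x)[T, z]` as
`Polynomial (Polynomial (FractionRing (MvPolynomial (Fin n) ℚ)))`; and
`φ ∈ K[T, x]` as `Polynomial (MvPolynomial (Fin n) K)` for a field extension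
`K` of `ℚ` (i.e. any field of characteristic zero).  The substitution
`B(T, φ(T, x))` is performed after moving all coefficients into `K(x)`.
-/

noncomputable section

/-- The canonical embedding `ℚ(x) → K(x)` induced by `ℚ ↪ K`. -/
def liftFrac (n : ℕ) (K : Type*) [Field K] [CharZero K] :
    FractionRing (MvPolynomial (Fin n) ℚ) →+* FractionRing (MvPolynomial (Fin n) K) :=
  IsFractionRing.lift
    (g := (algebraMap (MvPolynomial (Fin n) K)
        (FractionRing (MvPolynomial (Fin n) K))).comp
      (MvPolynomial.map (algebraMap ℚ K)))
    (by
      have h1 : Function.Injective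
          (algebraMap (MvPolynomial (Fin n) K) (FractionRing (MvPolynomial (Fin n) K))) :=
        IsFractionRing.injective _ _
      have h2 : Function.Injective
          (MvPolynomial.map (σ := Fin n) (algebraMap ℚ K)) :=
        MvPolynomial.map_injective _ (algebraMap ℚ K).injective
      exact fun a b hab => h2 (h1 hab))

/-!
Put `H = B - G`. Both are monic of `z`-degree `D_z`, so `H` has `z`-degree `d < D_z`, and its
coefficients still have `T`-degree at most `D`. The resultant `Res_z(G, H) ∈ ℚ(x)[T]` is a
combination `G p + H q`, so it vanishes at the approximate common root `φ` to order
`2·D·D_z + 1`; being a Sylvester determinant it has `T`-degree at most `(D_z + d)·D ≤ 2·D·D_z`,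
hence it is zero. After clearing the denominators of `H`, Gauss's lemma keeps `G` irreducible
over `ℚ(x, T)`, where a vanishing resultant forces `G ∣ H`: impossible for `H ≠ 0` of smaller
`z`-degree.
-/

open Polynomial

theorem Matrix.natDegree_det_le {ι R : Type*} [Fintype ι] [DecidableEq ι] [CommRing R]
    (M : Matrix ι ι R[X]) {D : ℕ} (h : ∀ i j, (M i j).natDegree ≤ D) :
    M.det.natDegree ≤ Fintype.card ι * D := by
  rw [Matrix.det_apply]
  refine natDegree_sum_le_of_forall_le _ _ fun σ _ => ?_
  refine (natDegree_smul_le _ _).trans ((natDegree_prod_le _ _).trans ?_)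
  exact (Finset.sum_le_sum fun i _ => h (σ i) i).trans_eq (by simp)

theorem Polynomial.natDegree_resultant_le {R : Type*} [CommRing R] {f g : R[X][X]} {D : ℕ}
    (hf : ∀ i, (f.coeff i).natDegree ≤ D) (hg : ∀ i, (g.coeff i).natDegree ≤ D) (m n : ℕ) :
    (resultant f g m n).natDegree ≤ (m + n) * D := by
  refine (Matrix.natDegree_det_le (D := D) (sylvester f g m n) fun i j => ?_).trans_eq (by simp)
  induction j using Fin.addCases <;>
    simp only [sylvester, Matrix.of_apply, Fin.addCases_left, Fin.addCases_right] <;>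
    split_ifs <;> simp [hf, hg]

theorem Polynomial.resultant_eq_zero_of_X_pow_dvd_eval {R L : Type*} [CommRing R] [CommRing L]
    [IsDomain L] {ι : R →+* L} (hι : Function.Injective ι) (φ : L[X]) {f g : R[X][X]} {D m : ℕ}
    (hf : ∀ i, (f.coeff i).natDegree ≤ D) (hg : ∀ i, (g.coeff i).natDegree ≤ D)
    (hfg : f.natDegree ≠ 0 ∨ g.natDegree ≠ 0) (hm : (f.natDegree + g.natDegree) * D < m)
    (hfφ : X ^ m ∣ (f.map (mapRingHom ι)).eval φ) (hgφ : X ^ m ∣ (g.map (mapRingHom ι)).eval φ) :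
    resultant f g = 0 := by
  obtain ⟨p, q, -, -, hpq⟩ := exists_mul_add_mul_eq_C_resultant f g le_rfl le_rfl hfg
  have hdvd : X ^ m ∣ (resultant f g).map ι := by
    have := congrArg (fun P => (P.map (mapRingHom ι)).eval φ) hpq
    simp only [Polynomial.map_add, Polynomial.map_mul, eval_add, eval_mul, Polynomial.map_C,
      eval_C, coe_mapRingHom] at this
    rw [← this]
    exact dvd_add (dvd_mul_of_dvd_left hfφ _) (dvd_mul_of_dvd_left hgφ _)
  have hlt : ((resultant f g).map ι).natDegree < (X ^ m : L[X]).natDegree := by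
    rw [natDegree_X_pow]
    exact (natDegree_map_le.trans (natDegree_resultant_le hf hg _ _)).trans_lt hm
  exact (Polynomial.map_eq_zero_iff hι).1 (eq_zero_of_dvd_of_natDegree_lt hdvd hlt)

theorem Polynomial.Monic.natDegree_le_of_resultant_eq_zero {S : Type*} [CommRing S] [IsDomain S]
    [IsIntegrallyClosed S] {f g : S[X]} (hf : f.Monic) (hirr : Irreducible f) (hg : g ≠ 0)
    (hres : resultant f g = 0) : f.natDegree ≤ g.natDegree := by
  have hinj := IsFractionRing.injective S (FractionRing S)
  set ι := algebraMap S (FractionRing S)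
  have hirr' : Irreducible (f.map ι) := hf.irreducible_iff_irreducible_map_fraction_map.1 hirr
  have hres' : resultant (f.map ι) (g.map ι) = 0 := by
    rw [natDegree_map_eq_of_injective hinj, natDegree_map_eq_of_injective hinj,
      resultant_map_map, hres, map_zero]
  have hdvd : f.map ι ∣ g.map ι := by
    by_contra h
    exact (resultant_eq_zero_iff.1 hres').2 (hirr'.coprime_iff_not_dvd.2 h)
  simpa only [natDegree_map_eq_of_injective hinj] using
    natDegree_le_of_dvd hdvd ((Polynomial.map_ne_zero_iff hinj).2 hg)

attribute [local instance] Polynomial.algebra in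
theorem IsFractionRing.exists_map_eq_C_C_mul (R : Type*) {F : Type*} [CommRing R] [IsDomain R]
    [Field F] [Algebra R F] [IsFractionRing R F] (P : F[X][X]) :
    ∃ r : R, r ≠ 0 ∧ ∃ Q : R[X][X],
      Q.map (mapRingHom (algebraMap R F)) = C (C (algebraMap R F r)) * P := by
  have := Polynomial.isLocalization (nonZeroDivisors R) F
  obtain ⟨_, ⟨r, hr, rfl⟩, hQ⟩ :=
    IsLocalization.integerNormalization_spec ((nonZeroDivisors R).map C) P
  rw [← algebraMap_smul F[X], smul_eq_C_mul, algebraMap_def, coe_mapRingHom, map_C] at hQ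
  exact ⟨r, nonZeroDivisors.ne_zero hr, _, hQ⟩

theorem Polynomial.Monic.natDegree_le_of_resultant_map_eq_zero {R F : Type*} [CommRing R]
    [IsDomain R] [IsIntegrallyClosed R[X]] [Field F] [Algebra R F] [IsFractionRing R F]
    {G : R[X][X]} (hG : G.Monic) (hirr : Irreducible G) {H : F[X][X]} (hH : H ≠ 0)
    (hres : resultant (G.map (mapRingHom (algebraMap R F))) H = 0) :
    G.natDegree ≤ H.natDegree := by
  set ψ := mapRingHom (algebraMap R F)
  have hψ : Function.Injective ψ := map_injective _ (IsFractionRing.injective R F)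
  obtain ⟨r, hr, Q, hQ⟩ := IsFractionRing.exists_map_eq_C_C_mul R H
  have hc : (C (algebraMap R F r) : F[X]) ≠ 0 := by
    simpa [IsFractionRing.to_map_eq_zero_iff] using hr
  have hQ0 : Q ≠ 0 := by
    rintro rfl
    simp [hc, hH] at hQ
  have hQdeg : Q.natDegree = H.natDegree := by
    rw [← natDegree_map_eq_of_injective hψ, hQ, natDegree_C_mul hc]
  have hGQ : resultant G Q = 0 := by
    apply hψ
    rw [map_zero, ← resultant_map_map, hQ, resultant_C_mul_right,
      ← natDegree_map_eq_of_injective hψ G, hQdeg, hres, mul_zero]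
  exact hQdeg ▸ hG.natDegree_le_of_resultant_eq_zero hirr hQ0 hGQ

theorem eval_map_liftFrac {n : ℕ} (K : Type*) [Field K] [CharZero K]
    (G : (MvPolynomial (Fin n) ℚ)[X][X]) (φ : (MvPolynomial (Fin n) K)[X]) :
    ((G.map (mapRingHom (algebraMap _ (FractionRing (MvPolynomial (Fin n) ℚ))))).map
        (mapRingHom (liftFrac n K))).eval
      (φ.map (algebraMap _ (FractionRing (MvPolynomial (Fin n) K)))) =
    ((G.map (mapRingHom (MvPolynomial.map (algebraMap ℚ K)))).eval φ).map
      (algebraMap _ (FractionRing (MvPolynomial (Fin n) K))) := by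
  have hcomp : (liftFrac n K).comp (algebraMap _ (FractionRing (MvPolynomial (Fin n) ℚ))) =
      (algebraMap _ (FractionRing (MvPolynomial (Fin n) K))).comp
        (MvPolynomial.map (algebraMap ℚ K)) :=
    RingHom.ext fun x => by
      rw [RingHom.comp_apply, RingHom.comp_apply]
      exact IsFractionRing.lift_algebraMap _ x
  rw [← coe_mapRingHom (algebraMap _ _), ← eval_map_apply, Polynomial.map_map,
    Polynomial.map_map, mapRingHom_comp, mapRingHom_comp, hcomp, coe_mapRingHom]

theorem stmt_11 {n : ℕ} (D Dz : ℕ)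
    (G : Polynomial (Polynomial (MvPolynomial (Fin n) ℚ)))
    (hGirr : Irreducible G) (hGmonic : G.Monic)
    (hGdegT : ∀ i : ℕ, (G.coeff i).natDegree ≤ D) (hGdegz : G.natDegree = Dz)
    (K : Type*) [Field K] [CharZero K]
    (φ : Polynomial (MvPolynomial (Fin n) K))
    -- `φ` is an approximate `z`-root of `G` of order `2·D·D_z + 1`:
    (hφ : ∀ j < 2 * D * Dz + 1,
      ((G.map (Polynomial.mapRingHom
          (MvPolynomial.map (algebraMap ℚ K)))).eval φ).coeff j = 0)
    (B : Polynomial (Polynomial (FractionRing (MvPolynomial (Fin n) ℚ))))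
    (hBmonic : B.Monic)
    (hBdegT : ∀ i : ℕ, (B.coeff i).natDegree ≤ D) (hBdegz : B.natDegree = Dz)
    -- `B(T, φ(T, x)) ≡ 0 mod T^{2·D·D_z + 1}`, with all coefficients viewed in `K(x)`:
    (hB : ∀ j < 2 * D * Dz + 1,
      ((B.map (Polynomial.mapRingHom (liftFrac n K))).eval
        (φ.map (algebraMap (MvPolynomial (Fin n) K)
          (FractionRing (MvPolynomial (Fin n) K))))).coeff j = 0) :
    B = G.map (Polynomial.mapRingHom
      (algebraMap (MvPolynomial (Fin n) ℚ) (FractionRing (MvPolynomial (Fin n) ℚ)))) := by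
  set G' := G.map (mapRingHom (algebraMap _ (FractionRing (MvPolynomial (Fin n) ℚ))))
  have hG'deg : G'.natDegree = Dz := (hGmonic.natDegree_map _).trans hGdegz
  have hG'T : ∀ i, (G'.coeff i).natDegree ≤ D := fun i => by
    rw [coeff_map]
    exact natDegree_map_le.trans (hGdegT i)
  have hDz : Dz ≠ 0 := by
    rintro rfl
    exact hGirr.not_isUnit (hGmonic.natDegree_eq_zero.1 hGdegz ▸ isUnit_one)
  by_contra hne
  have hH0 : B - G' ≠ 0 := sub_ne_zero.2 hne
  have hHdeg : (B - G').natDegree < Dz :=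
    IsMonicOfDegree.natDegree_sub_lt hDz ⟨hBdegz, hBmonic⟩ ⟨hG'deg, hGmonic.map _⟩
  have hHT : ∀ i, ((B - G').coeff i).natDegree ≤ D := fun i => by
    rw [coeff_sub]
    exact (natDegree_sub_le _ _).trans (max_le (hBdegT i) (hG'T i))
  have hGφ := map_dvd (mapRingHom (algebraMap _ (FractionRing (MvPolynomial (Fin n) K))))
    (X_pow_dvd_iff.2 hφ)
  rw [map_pow, coe_mapRingHom, map_X, ← eval_map_liftFrac] at hGφ
  have hHφ := dvd_sub (X_pow_dvd_iff.2 hB) hGφ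
  rw [← eval_sub, ← Polynomial.map_sub] at hHφ
  have hres : resultant G' (B - G') = 0 :=
    resultant_eq_zero_of_X_pow_dvd_eval (liftFrac n K).injective _ hG'T hHT (by omega)
      (by nlinarith) hGφ hHφ
  have := hGmonic.natDegree_le_of_resultant_map_eq_zero hGirr hH0 hres
  omega
end
end

section
/- Let F be a field of characteristic zero with algebraic closure F̄. Let f, g ∈ F[z] be monic polynomials of degrees D and t respectively, with 1 ≤ t ≤ D. Let S_f and S_g denote the multisets of roots (counted with multiplicity) of f and g in F̄, and for a multiset S and integer i ≥ 1, let p_i(S) := Σ_{α∈S} α^i denote the i-th power sum. For i = 1, …, D − t set r_i := p_i(S_f) − p_i(S_g); each r_i lies in F. Define e_0 := 1 and, for j = 1, …, D − t, define e_j ∈ F recursively via Newton's identities: j·e_j = Σ_{i=1}^{j} (−1)^{i−1} e_{j−i} r_i. Set h̃(z) := Σ_{j=0}^{D−t} (−1)^j e_j z^{D−t−j}. Then g divides f in F[z] if and only if f = h̃·g. -/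
/-!
If `f = g * q`, then `q` is monic of degree `D - t` and the roots of `f` are those of `g` together
with those of `q`, so `r_i` is the `i`-th power sum of the roots of `q`. In characteristic zero
Newton's identities determine the elementary symmetric functions from the power sums, so `e_j` is
the `j`-th elementary symmetric function of the roots of `q`, and Vieta's formulas give `q = h̃`.
Read the other way, Newton's identities express power sums as integer polynomials in the
elementary symmetric functions, which are up to sign the coefficients of a monic polynomial; this
puts the `r_i` in `F`.
-/

section

open Finset Polynomial

variable {R : Type*} [CommRing R]

theorem Multiset.mul_esymm_eq_sum_psum (s : Multiset R) (k : ℕ) :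
    k * s.esymm k =
      ∑ i ∈ Finset.Icc 1 k, (-1) ^ (i - 1) * s.esymm (k - i) * (s.map (· ^ i)).sum := by
  obtain ⟨n, x, rfl⟩ : ∃ n, ∃ x : Fin n → R, s = List.ofFn x :=
    ⟨_, s.toList.get, by rw [List.ofFn_get, Multiset.coe_toList]⟩
  have psum_eq (i : ℕ) : ∑ j, x j ^ i = ((List.ofFn x : Multiset R).map (· ^ i)).sum := by
    rw [sum_eq_multiset_sum, ← Fin.univ_val_map, Multiset.map_map]
    rfl
  have newton := congrArg (MvPolynomial.aeval x) (MvPolynomial.mul_esymm_eq_sum (Fin n) R k)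
  simp only [map_mul, map_natCast, map_sum, map_pow, map_neg, map_one,
    MvPolynomial.aeval_esymm_eq_multiset_esymm, MvPolynomial.psum, MvPolynomial.aeval_X,
    Fin.univ_val_map, psum_eq] at newton
  rw [newton, mul_sum]
  refine sum_nbij' Prod.snd (fun i ↦ (k - i, i)) ?_ ?_ ?_ (fun _ _ ↦ rfl) ?_
  · simp only [Finset.mem_filter, Finset.HasAntidiagonal.mem_antidiagonal, Finset.mem_Icc]
    omega
  · simp only [Finset.mem_filter, Finset.HasAntidiagonal.mem_antidiagonal, Finset.mem_Icc]
    omega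
  · rintro ⟨a, b⟩ hab
    rw [Finset.mem_filter, Finset.HasAntidiagonal.mem_antidiagonal] at hab
    rw [Prod.mk.injEq]
    omega
  · rintro ⟨a, b⟩ hab
    obtain ⟨rfl, hb⟩ : a + b = k ∧ a < k := by simpa using hab
    have sign : (-1 : R) ^ (a + b + 1) * (-1) ^ a = (-1) ^ (b - 1) := by
      rw [← pow_add, show a + b + 1 + a = b - 1 + 2 * (a + 1) by omega, pow_add, pow_mul]
      simp
    rw [Nat.add_sub_cancel, ← sign]
    ring

theorem Subring.neg_one_pow_mul_mem_iff (S : Subring R) (n : ℕ) {x : R} :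
    (-1) ^ n * x ∈ S ↔ x ∈ S := by
  rcases neg_one_pow_eq_or R n with h | h <;> simp [h]

theorem Multiset.esymm_zero (s : Multiset R) : s.esymm 0 = 1 := by
  simp [esymm]

theorem Multiset.esymm_eq_zero_of_card_lt (s : Multiset R) {j : ℕ} (h : card s < j) :
    s.esymm j = 0 := by
  simp [esymm, powersetCard_eq_empty _ h]

theorem Multiset.esymm_eq_of_newton [IsDomain R] [CharZero R] (s : Multiset R) {m : ℕ}
    {e : ℕ → R} (he0 : e 0 = 1)
    (hnewton : ∀ j, 1 ≤ j → j ≤ m →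
      (j : R) * e j = ∑ i ∈ Finset.Icc 1 j, (-1) ^ (i - 1) * e (j - i) * (s.map (· ^ i)).sum) :
    ∀ j ≤ m, e j = s.esymm j := by
  intro j
  induction j using Nat.strong_induction_on with
  | _ j ih =>
    intro hjm
    rcases Nat.eq_zero_or_pos j with rfl | hj
    · rw [he0, esymm_zero]
    · apply mul_left_cancel₀ (Nat.cast_ne_zero.mpr hj.ne')
      rw [hnewton j hj hjm, mul_esymm_eq_sum_psum]
      refine Finset.sum_congr rfl fun i hi ↦ ?_
      rw [Finset.mem_Icc] at hi
      rw [ih (j - i) (by omega) (by omega)]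

theorem Multiset.sum_map_pow_mem_of_esymm_mem (S : Subring R) (s : Multiset R)
    (hS : ∀ j, s.esymm j ∈ S) (i : ℕ) : (s.map (· ^ i)).sum ∈ S := by
  induction i using Nat.strong_induction_on with
  | _ i ih =>
    rcases i with _ | k
    · simp
    · -- In Newton's identity of degree `k + 1` the term `i = k + 1` is `± p_{k+1}`; the rest lie in `S`.
      have newton := s.mul_esymm_eq_sum_psum (k + 1)
      rw [Finset.sum_Icc_succ_top (by omega), Nat.add_sub_cancel, Nat.sub_self, esymm_zero,
        mul_one] at newton
      rw [← S.neg_one_pow_mul_mem_iff k, eq_sub_of_add_eq' newton.symm]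
      refine S.sub_mem (S.mul_mem (natCast_mem S _) (hS _)) (S.sum_mem fun i hi ↦ ?_)
      rw [Finset.mem_Icc] at hi
      exact S.mul_mem (S.mul_mem (S.pow_mem (S.neg_mem S.one_mem) _) (hS _)) (ih i (by omega))

namespace Polynomial

variable {K : Type*} [Field K] [IsAlgClosed K] (φ : R →+* K) {p : R[X]}

theorem Monic.esymm_roots_map_mem_range (hp : p.Monic) (j : ℕ) :
    (p.map φ).roots.esymm j ∈ φ.range := by
  have hcard := splits_iff_card_roots.mp (IsAlgClosed.splits (p.map φ))
  by_cases hj : j ≤ (p.map φ).natDegree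
  · have hcoeff := coeff_eq_esymm_roots_of_card hcard (k := (p.map φ).natDegree - j) (by omega)
    rw [(hp.map φ).leadingCoeff, one_mul, Nat.sub_sub_self hj, coeff_map] at hcoeff
    rw [← φ.range.neg_one_pow_mul_mem_iff j, ← hcoeff]
    exact φ.mem_range_self _
  · rw [Multiset.esymm_eq_zero_of_card_lt _ (by omega)]
    exact φ.range.zero_mem

theorem Monic.sum_map_pow_roots_map_mem_range (hp : p.Monic) (i : ℕ) :
    ((p.map φ).roots.map (· ^ i)).sum ∈ φ.range :=
  Multiset.sum_map_pow_mem_of_esymm_mem _ _ (hp.esymm_roots_map_mem_range φ) i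

theorem Monic.map_eq_sum_esymm_roots (hp : p.Monic) :
    p.map φ = ∑ j ∈ Finset.range (p.natDegree + 1),
      C ((-1) ^ j * (p.map φ).roots.esymm j) * X ^ (p.natDegree - j) := by
  have hcard := splits_iff_card_roots.mp (IsAlgClosed.splits (p.map φ))
  conv_lhs => rw [(IsAlgClosed.splits _).eq_prod_roots_of_monic (hp.map φ),
    Multiset.prod_X_sub_X_eq_sum_esymm, hcard, hp.natDegree_map]
  simp only [map_mul, map_pow, map_neg, map_one, mul_assoc]

theorem Monic.map_eq_sum_of_newton [CharZero K] (hp : p.Monic) {e : ℕ → K} (he0 : e 0 = 1)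
    (hnewton : ∀ j, 1 ≤ j → j ≤ p.natDegree →
      (j : K) * e j = ∑ i ∈ Finset.Icc 1 j,
        (-1) ^ (i - 1) * e (j - i) * ((p.map φ).roots.map (· ^ i)).sum) :
    p.map φ = ∑ j ∈ Finset.range (p.natDegree + 1), C ((-1) ^ j * e j) * X ^ (p.natDegree - j) := by
  rw [hp.map_eq_sum_esymm_roots φ]
  refine Finset.sum_congr rfl fun j hj ↦ ?_
  rw [(p.map φ).roots.esymm_eq_of_newton he0 hnewton j (Finset.mem_range_succ_iff.mp hj)]

end Polynomial

end

theorem stmt_12_general {F : Type*} [Field F] [CharZero F] (D t : ℕ)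
    (f g : Polynomial F) (hf : f.Monic) (hg : g.Monic)
    (hfD : f.natDegree = D) (hgt : g.natDegree = t)
    -- `r i = p_i(S_f) − p_i(S_g)`, power sums of the root multisets in `F̄`:
    (r : ℕ → AlgebraicClosure F)
    (hr : ∀ i : ℕ, r i =
      ((f.map (algebraMap F (AlgebraicClosure F))).roots.map (· ^ i)).sum -
      ((g.map (algebraMap F (AlgebraicClosure F))).roots.map (· ^ i)).sum)
    -- `e j` defined by Newton's identities: `e 0 = 1` and
    -- `j·e_j = Σ_{i=1}^{j} (−1)^{i−1} e_{j−i} r_i` for `1 ≤ j ≤ D − t`: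
    (e : ℕ → AlgebraicClosure F) (he0 : e 0 = 1)
    (herec : ∀ j : ℕ, 1 ≤ j → j ≤ D - t →
      (j : AlgebraicClosure F) * e j =
        ∑ i ∈ Finset.Icc 1 j, (-1 : AlgebraicClosure F) ^ (i - 1) * e (j - i) * r i) :
    -- each `r i` (for `1 ≤ i ≤ D − t`) lies in `F`, and `g ∣ f` iff `f = h̃·g`:
    (∀ i : ℕ, 1 ≤ i → i ≤ D - t →
      r i ∈ (algebraMap F (AlgebraicClosure F)).range) ∧
    (g ∣ f ↔
      f.map (algebraMap F (AlgebraicClosure F)) =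
        (∑ j ∈ Finset.range (D - t + 1),
            Polynomial.C ((-1 : AlgebraicClosure F) ^ j * e j) *
              Polynomial.X ^ (D - t - j)) *
          g.map (algebraMap F (AlgebraicClosure F))) := by
  set φ := algebraMap F (AlgebraicClosure F)
  refine ⟨fun i _ _ ↦ hr i ▸ sub_mem (hf.sum_map_pow_roots_map_mem_range φ i)
    (hg.sum_map_pow_roots_map_mem_range φ i), ⟨fun ⟨q, hfgq⟩ ↦ ?_, fun h ↦ ?_⟩⟩
  · have hq : q.Monic := hg.of_mul_monic_left (hfgq ▸ hf)
    have hqdeg : q.natDegree = D - t := by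
      have := Polynomial.natDegree_mul hg.ne_zero hq.ne_zero
      rw [← hfgq] at this
      omega
    have hroots : (f.map φ).roots = (g.map φ).roots + (q.map φ).roots := by
      rw [hfgq, Polynomial.map_mul, Polynomial.roots_mul ((hg.map φ).mul (hq.map φ)).ne_zero]
    have hrq (i : ℕ) : r i = ((q.map φ).roots.map (· ^ i)).sum := by
      rw [hr, hroots, Multiset.map_add, Multiset.sum_add, add_sub_cancel_left]
    rw [hfgq, Polynomial.map_mul, mul_comm, ← hqdeg]
    congr 1
    refine hq.map_eq_sum_of_newton φ he0 fun j hj1 hj2 ↦ ?_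
    simp only [herec j hj1 (hqdeg ▸ hj2), hrq]
  · exact (Polynomial.map_dvd_map' φ).mp (Dvd.intro_left _ h.symm)

theorem stmt_12 {F : Type*} [Field F] [CharZero F] (D t : ℕ)
    (ht1 : 1 ≤ t) (htD : t ≤ D)
    (f g : Polynomial F) (hf : f.Monic) (hg : g.Monic)
    (hfD : f.natDegree = D) (hgt : g.natDegree = t)
    -- `r i = p_i(S_f) − p_i(S_g)`, power sums of the root multisets in `F̄`:
    (r : ℕ → AlgebraicClosure F)
    (hr : ∀ i : ℕ, r i =
      ((f.map (algebraMap F (AlgebraicClosure F))).roots.map (· ^ i)).sum -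
      ((g.map (algebraMap F (AlgebraicClosure F))).roots.map (· ^ i)).sum)
    -- `e j` defined by Newton's identities: `e 0 = 1` and
    -- `j·e_j = Σ_{i=1}^{j} (−1)^{i−1} e_{j−i} r_i` for `1 ≤ j ≤ D − t`:
    (e : ℕ → AlgebraicClosure F) (he0 : e 0 = 1)
    (herec : ∀ j : ℕ, 1 ≤ j → j ≤ D - t →
      (j : AlgebraicClosure F) * e j =
        ∑ i ∈ Finset.Icc 1 j, (-1 : AlgebraicClosure F) ^ (i - 1) * e (j - i) * r i) :
    -- each `r i` (for `1 ≤ i ≤ D − t`) lies in `F`, and `g ∣ f` iff `f = h̃·g`: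
    (∀ i : ℕ, 1 ≤ i → i ≤ D - t →
      r i ∈ (algebraMap F (AlgebraicClosure F)).range) ∧
    (g ∣ f ↔
      f.map (algebraMap F (AlgebraicClosure F)) =
        (∑ j ∈ Finset.range (D - t + 1),
            Polynomial.C ((-1 : AlgebraicClosure F) ^ j * e j) *
              Polynomial.X ^ (D - t - j)) *
          g.map (algebraMap F (AlgebraicClosure F))) :=
  stmt_12_general D t f g hf hg hfD hgt r hr e he0 herec
end

section
/- Let F be a field, let k > 1, and let P ∈ F[T, x, z] be T-regularized and monic in z with deg_z P ≥ 1. Let R ∈ F[T, x] be a truncated, non-degenerate, approximate z-root of P of order k, let α := R(0, 0) ∈ F and β := (∂P/∂z)(0, 0, α), so that β ≠ 0. Define φ_i, σ_i ∈ F[T, x] by φ_0 := α, σ_0 := 1/β, and for i ≥ 0, φ_{i+1} := φ_i − P(T, x, φ_i)·σ_i and σ_{i+1} := 2σ_i − σ_i²·(∂P/∂z)(T, x, φ_{i+1}). Then for every m ∈ ℕ with 2^m ≥ k, one has R(T, x) = φ_m(T, x) trunc T^k. -/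
/-!
The truncated, non-degenerate, approximate `z`-root `R` of order `k` of a
`T`-regularized, monic-in-`z` polynomial `P` is recovered as the `trunc T^k`
of the `m`-th quadratic-convergence Newton iterate whenever `2^m ≥ k`.

`P ∈ F[T, x, z]` is represented as `Polynomial (Polynomial (MvPolynomial (Fin m) F))`,
with `z` the outer variable and `T` the inner one, and `R ∈ F[T, x]` as
`Polynomial (MvPolynomial (Fin m) F)` (a polynomial in `T` over `F[x]`).
-/

noncomputable section

/-- `F[T, x_1, …, x_m]`, with `T` the (outer) `Polynomial` variable. -/
abbrev PolyTX (F : Type*) [Field F] (m : ℕ) := Polynomial (MvPolynomial (Fin m) F)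

/-- `F[T, x_1, …, x_m, z]`, with `z` the outer variable and `T` the inner one. -/
abbrev PolyTXZ (F : Type*) [Field F] (m : ℕ) := Polynomial (PolyTX F m)

/-- Evaluation at `T = 0`, `x = 0`. -/
def ev0 (F : Type*) [Field F] (m : ℕ) : PolyTX F m →+* F :=
  (MvPolynomial.eval (0 : Fin m → F)).comp
    (Polynomial.evalRingHom (0 : MvPolynomial (Fin m) F))

/-- `P` is monic in `z`: its leading coefficient in `z` is a nonzero element of `F`. -/
def MonicInZ {F : Type*} [Field F] {m : ℕ} (P : PolyTXZ F m) : Prop :=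
  ∃ c : F, c ≠ 0 ∧ P.leadingCoeff = Polynomial.C (MvPolynomial.C c)

/-- `P` is `T`-regularized: `P(0, x, z) ∈ F[z]`. -/
def TRegularized {F : Type*} [Field F] {m : ℕ} (P : PolyTXZ F m) : Prop :=
  ∀ i : ℕ, ∃ c : F, (P.coeff i).coeff 0 = MvPolynomial.C c

/-- `Φ` is an approximate `z`-root of `P` of order `k`: `P(T, x, Φ) ≡ 0 mod T^k`. -/
def IsApproxRoot {F : Type*} [Field F] {m : ℕ} (k : ℕ) (P : PolyTXZ F m)
    (Φ : PolyTX F m) : Prop :=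
  ∀ j < k, (P.eval Φ).coeff j = 0

/-- `Φ` is truncated: `deg_T Φ < k`. -/
def IsTruncated {F : Type*} [Field F] {m : ℕ} (k : ℕ) (Φ : PolyTX F m) : Prop :=
  Φ.degree < (k : ℕ)

/-- `Φ` is non-degenerate for `P`: `(∂P/∂z)(0, 0, Φ(0,0)) ≠ 0`. -/
def NonDegenerate {F : Type*} [Field F] {m : ℕ} (P : PolyTXZ F m) (Φ : PolyTX F m) : Prop :=
  ((Polynomial.derivative P).map (ev0 F m)).eval (ev0 F m Φ) ≠ 0

/-- `trunc T^k`: keep only the monomials of `T`-degree less than `k`. -/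
def truncT {A : Type*} [CommRing A] (k : ℕ) (p : Polynomial A) : Polynomial A :=
  ∑ j ∈ Finset.range k, Polynomial.monomial j (p.coeff j)

/-- An element of a multivariate polynomial ring over a field that is algebraic over the
base field is a constant. -/
lemma MvAlgConst {F : Type*} [Field F] : ∀ (n : ℕ) (r : MvPolynomial (Fin n) F),
    IsAlgebraic F r → ∃ a : F, r = MvPolynomial.C a := by
  intro n
  induction n with
  | zero =>
    intro r _
    obtain ⟨a, ha⟩ := MvPolynomial.C_surjective (Fin 0) r
    exact ⟨a, ha.symm⟩
  | succ n ih =>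
    intro r hr
    set e := MvPolynomial.finSuccEquiv F n with he
    have hq : IsAlgebraic F (e r) := by
      obtain ⟨p, hp0, hp⟩ := hr
      refine ⟨p, hp0, ?_⟩
      have : (e r) = e.toAlgHom r := rfl
      rw [this, Polynomial.aeval_algHom_apply, hp, map_zero]
    have hdeg0 : (e r).natDegree = 0 := by
      by_contra hne
      have hne0 : (e r) ≠ 0 := fun h => hne (by simp [h])
      have ht : Transcendental (MvPolynomial (Fin n) F) (e r) :=
        Polynomial.transcendental _ hne
          (mem_nonZeroDivisors_of_ne_zero (Polynomial.leadingCoeff_ne_zero.mpr hne0))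
      have ht' : Transcendental F (e r) :=
        ht.restrictScalars (by
          rw [MvPolynomial.algebraMap_eq]; exact MvPolynomial.C_injective _ _)
      exact ht' hq
    obtain ⟨b, hb⟩ := Polynomial.natDegree_eq_zero.mp hdeg0
    have hbalg : IsAlgebraic F b := by
      rw [← hb, ← Polynomial.algebraMap_eq,
        isAlgebraic_algebraMap_iff (by rw [Polynomial.algebraMap_eq]; exact Polynomial.C_injective)] at hq
      exact hq
    obtain ⟨a, hba⟩ := ih b hbalg
    refine ⟨a, e.injective ?_⟩
    rw [← hb, hba]
    have h1 : (MvPolynomial.C a : MvPolynomial (Fin (n+1)) F) = algebraMap F _ a := rfl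
    have h2 : (Polynomial.C (MvPolynomial.C a) : Polynomial (MvPolynomial (Fin n) F))
        = algebraMap F _ a := by
      rw [Polynomial.algebraMap_apply, MvPolynomial.algebraMap_eq]
    rw [h1, e.commutes, ← h2]

/-- `truncT k p = q` when `q` has `T`-degree `< k` and `p ≡ q (mod T^k)`. -/
lemma truncT_eq {A : Type*} [CommRing A] {k : ℕ} (hk : 0 < k) {p q : Polynomial A}
    (hdeg : q.degree < (k : ℕ)) (hdvd : Polynomial.X ^ k ∣ p - q) : truncT k p = q := by
  have hco : ∀ j < k, p.coeff j = q.coeff j := by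
    intro j hj
    have := Polynomial.X_pow_dvd_iff.mp hdvd j hj
    rw [Polynomial.coeff_sub, sub_eq_zero] at this
    exact this
  have hnd : q.natDegree < k := by
    rcases eq_or_ne q 0 with h | h
    · simpa [h] using hk
    · exact (Polynomial.natDegree_lt_iff_degree_lt h).mpr hdeg
  calc truncT k p = ∑ j ∈ Finset.range k, Polynomial.monomial j (q.coeff j) :=
        Finset.sum_congr rfl fun j hj => by rw [hco j (Finset.mem_range.mp hj)]
    _ = q := (q.as_sum_range' k hnd).symm

/-- Coefficient-0 ring homomorphisms commute with polynomial evaluation. -/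
lemma psi_eval {A : Type*} [CommRing A] (ψ : Polynomial A →+* A)
    (p : Polynomial (Polynomial A)) (Φ : Polynomial A) :
    ψ (p.eval Φ) = (p.map ψ).eval (ψ Φ) := by
  rw [Polynomial.eval_map, Polynomial.eval₂_at_apply]

theorem stmt_13 {F : Type*} [Field F] {n : ℕ} (k : ℕ) (hk : 1 < k)
    (P : PolyTXZ F n) (hdeg : 1 ≤ P.natDegree)
    (hreg : TRegularized P) (hmonic : MonicInZ P)
    (R : PolyTX F n)
    (hroot : IsApproxRoot k P R) (htr : IsTruncated k R) (hnd : NonDegenerate P R)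
    -- `α := R(0, 0)` and `β := (∂P/∂z)(0, 0, α)` (so `β ≠ 0` by non-degeneracy):
    (α β : F) (hα : α = ev0 F n R)
    (hβ : β = ((Polynomial.derivative P).map (ev0 F n)).eval (ev0 F n R))
    -- the quadratic-convergence Newton iteration:
    (φ σ : ℕ → PolyTX F n)
    (hφ0 : φ 0 = Polynomial.C (MvPolynomial.C α))
    (hσ0 : σ 0 = Polynomial.C (MvPolynomial.C β⁻¹))
    (hφ : ∀ i, φ (i + 1) = φ i - P.eval (φ i) * σ i)
    (hσ : ∀ i, σ (i + 1) = 2 * σ i - σ i ^ 2 * (Polynomial.derivative P).eval (φ (i + 1))) :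
    ∀ m : ℕ, k ≤ 2 ^ m → R = truncT k (φ m) := by
  have hβne : β ≠ 0 := by rw [hβ]; exact hnd
  set ψ : PolyTX F n →+* MvPolynomial (Fin n) F := Polynomial.evalRingHom 0 with hψdef
  set ε : MvPolynomial (Fin n) F →+* F := MvPolynomial.eval 0 with hεdef
  have hψc : ∀ p : PolyTX F n, ψ p = p.coeff 0 := fun p => by
    rw [hψdef, Polynomial.coe_evalRingHom]
    exact (Polynomial.coeff_zero_eq_eval_zero p).symm
  have hev0 : ev0 F n = ε.comp ψ := rfl
  have hev0R : ev0 F n R = ε (ψ R) := rfl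
  -- the polynomial `Q = P(0, x, z) ∈ F[z]`
  set Q : Polynomial F := (P.map ψ).map ε with hQdef
  have hP0Q : P.map ψ = Q.map MvPolynomial.C := by
    apply Polynomial.ext
    intro i
    obtain ⟨c, hc⟩ := hreg i
    have h1 : (P.map ψ).coeff i = MvPolynomial.C c := by
      rw [Polynomial.coeff_map, hψc, hc]
    rw [h1, Polynomial.coeff_map, hQdef, Polynomial.coeff_map, h1]
    simp [hεdef]
  have hevalC : ∀ (q : Polynomial F) (x : F),
      (q.map (MvPolynomial.C : F →+* MvPolynomial (Fin n) F)).eval (MvPolynomial.C x)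
        = MvPolynomial.C (q.eval x) := fun q x => by
    rw [Polynomial.eval_map, Polynomial.eval₂_at_apply]
  -- `R(0,x)` is a root of `Q`
  have hr0root : (P.map ψ).eval (ψ R) = 0 := by
    rw [← psi_eval, hψc, hroot 0 (by omega)]
  have hQne : Q ≠ 0 := by
    intro h
    obtain ⟨c, hc0, hcl⟩ := hmonic
    have : Q.coeff P.natDegree = c := by
      rw [hQdef, Polynomial.coeff_map, Polynomial.coeff_map, hψc,
        Polynomial.coeff_natDegree, hcl, Polynomial.coeff_C_zero]
      simp [hεdef]
    rw [h] at this
    simp at this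
    exact hc0 this.symm
  -- `R(0,x)` is a constant
  obtain ⟨a, hr0a⟩ := MvAlgConst n (ψ R) ⟨Q, hQne, by
    rw [Polynomial.aeval_def, MvPolynomial.algebraMap_eq, ← Polynomial.eval_map, ← hP0Q]
    exact hr0root⟩
  have hαa : α = a := by
    rw [hα, hev0R, hr0a]
    simp [hεdef]
  have hψRα : ψ R = MvPolynomial.C α := by rw [hαa, hr0a]
  have hQα : Q.eval α = 0 := by
    have h2 : (MvPolynomial.C (Q.eval α) : MvPolynomial (Fin n) F) = 0 := by
      rw [← hevalC, ← hP0Q, ← hψRα]; exact hr0root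
    simpa using h2
  -- `β` is the value of `Q'` at `α`
  have hDmap : (Polynomial.derivative P).map (ev0 F n) = Polynomial.derivative Q := by
    rw [hev0, ← Polynomial.map_map, hQdef, Polynomial.derivative_map, Polynomial.derivative_map]
  have hβQ : β = (Polynomial.derivative Q).eval α := by
    rw [hβ, hDmap, ← hα]
  have hDP0 : (Polynomial.derivative P).map ψ
      = (Polynomial.derivative Q).map MvPolynomial.C := by
    rw [← Polynomial.derivative_map, hP0Q, Polynomial.derivative_map]
  -- base-case coefficient computations
  have hψφ0 : ψ (φ 0) = MvPolynomial.C α := by rw [hφ0, hψc, Polynomial.coeff_C_zero]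
  have hψσ0 : ψ (σ 0) = MvPolynomial.C β⁻¹ := by rw [hσ0, hψc, Polynomial.coeff_C_zero]
  have base_a : ψ (P.eval (φ 0)) = 0 := by
    rw [psi_eval, hψφ0, hP0Q, hevalC, hQα, map_zero]
  have hDeval0 : ψ ((Polynomial.derivative P).eval (φ 0)) = MvPolynomial.C β := by
    rw [psi_eval, hψφ0, hDP0, hevalC, ← hβQ]
  have base_b : ψ (σ 0 * (Polynomial.derivative P).eval (φ 0) - 1) = 0 := by
    rw [map_sub, map_mul, map_one, hψσ0, hDeval0, ← map_mul,
      inv_mul_cancel₀ hβne, map_one, sub_self]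
  have base_c : ψ (R - φ 0) = 0 := by
    rw [map_sub, hψφ0, hψRα, sub_self]
  have hXdvd : ∀ p : PolyTX F n, ψ p = 0 → (Polynomial.X : PolyTX F n) ∣ p := fun p hp =>
    Polynomial.X_dvd_iff.mpr (by rw [← hψc]; exact hp)
  -- the main induction
  have key : ∀ i : ℕ,
      ((Polynomial.X : PolyTX F n) ^ (2^i) ∣ P.eval (φ i)) ∧
      ((Polynomial.X : PolyTX F n) ^ (2^i) ∣
        σ i * (Polynomial.derivative P).eval (φ i) - 1) ∧
      ((Polynomial.X : PolyTX F n) ^ (min (2^i) k) ∣ R - φ i) := by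
    intro i
    induction i with
    | zero =>
      have h1 : (2:ℕ)^0 = 1 := pow_zero 2
      have h2 : min ((2:ℕ)^0) k = 1 := by rw [h1]; omega
      refine ⟨?_, ?_, ?_⟩
      · rw [h1, pow_one]; exact hXdvd _ base_a
      · rw [h1, pow_one]; exact hXdvd _ base_b
      · rw [h2, pow_one]; exact hXdvd _ base_c
    | succ i ih =>
      obtain ⟨ha, hb, hc⟩ := ih
      have hpow : (Polynomial.X : PolyTX F n) ^ (2^(i+1))
          = Polynomial.X ^ (2^i) * Polynomial.X ^ (2^i) := by
        rw [← pow_add, pow_succ, mul_two]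
      have hstep : (Polynomial.X : PolyTX F n) ^ (2^i) ∣ φ (i+1) - φ i := by
        rw [hφ i]
        have h3 : φ i - P.eval (φ i) * σ i - φ i = -(P.eval (φ i) * σ i) := by ring
        rw [h3]
        exact dvd_neg.mpr (ha.mul_right (σ i))
      have ha' : (Polynomial.X : PolyTX F n) ^ (2^(i+1)) ∣ P.eval (φ (i+1)) := by
        obtain ⟨q, hq⟩ := P.binomExpansion (φ i) (-(P.eval (φ i) * σ i))
        have hφs : φ (i+1) = φ i + -(P.eval (φ i) * σ i) := by rw [hφ i]; ring
        rw [hφs, hq, hpow]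
        have hid : P.eval (φ i)
            + (Polynomial.derivative P).eval (φ i) * -(P.eval (φ i) * σ i)
            + q * (-(P.eval (φ i) * σ i))^2
            = P.eval (φ i) * (1 - σ i * (Polynomial.derivative P).eval (φ i))
              + q * σ i ^ 2 * (P.eval (φ i) * P.eval (φ i)) := by ring
        rw [hid]
        have hone : (Polynomial.X : PolyTX F n) ^ (2^i) ∣
            1 - σ i * (Polynomial.derivative P).eval (φ i) := by
          have h4 : (1 : PolyTX F n) - σ i * (Polynomial.derivative P).eval (φ i)
              = -(σ i * (Polynomial.derivative P).eval (φ i) - 1) := by ring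
          rw [h4]; exact dvd_neg.mpr hb
        exact dvd_add (mul_dvd_mul ha hone) ((mul_dvd_mul ha ha).mul_left _)
      have hD1 : (Polynomial.X : PolyTX F n) ^ (2^i) ∣
          σ i * (Polynomial.derivative P).eval (φ (i+1)) - 1 := by
        have h1 : (Polynomial.X : PolyTX F n) ^ (2^i) ∣
            (Polynomial.derivative P).eval (φ (i+1))
              - (Polynomial.derivative P).eval (φ i) :=
          dvd_trans hstep (Polynomial.sub_dvd_eval_sub _ _ _)
        have hid : σ i * (Polynomial.derivative P).eval (φ (i+1)) - 1
            = σ i * ((Polynomial.derivative P).eval (φ (i+1))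
                - (Polynomial.derivative P).eval (φ i))
              + (σ i * (Polynomial.derivative P).eval (φ i) - 1) := by ring
        rw [hid]
        exact dvd_add (h1.mul_left _) hb
      have hb' : (Polynomial.X : PolyTX F n) ^ (2^(i+1)) ∣
          σ (i+1) * (Polynomial.derivative P).eval (φ (i+1)) - 1 := by
        rw [hσ i, hpow]
        have hid : (2 * σ i - σ i ^ 2 * (Polynomial.derivative P).eval (φ (i+1)))
              * (Polynomial.derivative P).eval (φ (i+1)) - 1
            = -((σ i * (Polynomial.derivative P).eval (φ (i+1)) - 1)
              * (σ i * (Polynomial.derivative P).eval (φ (i+1)) - 1)) := by ring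
        rw [hid]
        exact dvd_neg.mpr (mul_dvd_mul hD1 hD1)
      have hce : (Polynomial.X : PolyTX F n) ^ (min (2^i) k) ∣ R - φ (i+1) := by
        have hid : R - φ (i+1) = (R - φ i) - (φ (i+1) - φ i) := by ring
        rw [hid]
        exact dvd_sub hc (dvd_trans (pow_dvd_pow _ (min_le_left _ _)) hstep)
      have hc' : (Polynomial.X : PolyTX F n) ^ (min (2^(i+1)) k) ∣ R - φ (i+1) := by
        rcases le_or_gt k (2^i) with hkM | hMk
        · have h1 : min (2^i) k = k := min_eq_right hkM
          have h2 : min (2^(i+1)) k = k :=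
            min_eq_right (le_trans hkM (Nat.pow_le_pow_right (by norm_num) (Nat.le_succ i)))
          rw [h2]; rw [h1] at hce
          exact hce
        · have h1 : min (2^i) k = 2^i := min_eq_left hMk.le
          rw [h1] at hce
          have hN2 : min (2^(i+1)) k ≤ 2^(i+1) := min_le_left _ _
          have hNk : min (2^(i+1)) k ≤ k := min_le_right _ _
          obtain ⟨q', hq'⟩ := P.binomExpansion (φ (i+1)) (R - φ (i+1))
          have hR : φ (i+1) + (R - φ (i+1)) = R := by ring
          rw [hR] at hq'
          have hPR : (Polynomial.X : PolyTX F n) ^ (min (2^(i+1)) k) ∣ P.eval R := by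
            refine dvd_trans (pow_dvd_pow _ hNk) ?_
            rw [Polynomial.X_pow_dvd_iff]
            exact hroot
          have hPφ : (Polynomial.X : PolyTX F n) ^ (min (2^(i+1)) k) ∣ P.eval (φ (i+1)) :=
            dvd_trans (pow_dvd_pow _ hN2) ha'
          have he2 : (Polynomial.X : PolyTX F n) ^ (min (2^(i+1)) k) ∣ (R - φ (i+1))^2 := by
            refine dvd_trans (pow_dvd_pow _ hN2) ?_
            rw [hpow, sq]
            exact mul_dvd_mul hce hce
          have hDe : (Polynomial.X : PolyTX F n) ^ (min (2^(i+1)) k) ∣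
              (Polynomial.derivative P).eval (φ (i+1)) * (R - φ (i+1)) := by
            have hid : (Polynomial.derivative P).eval (φ (i+1)) * (R - φ (i+1))
                = P.eval R - P.eval (φ (i+1)) - q' * (R - φ (i+1))^2 := by
              rw [hq']; ring
            rw [hid]
            exact dvd_sub (dvd_sub hPR hPφ) (he2.mul_left _)
          have hid2 : R - φ (i+1)
              = σ (i+1) * ((Polynomial.derivative P).eval (φ (i+1)) * (R - φ (i+1)))
                - (σ (i+1) * (Polynomial.derivative P).eval (φ (i+1)) - 1)
                  * (R - φ (i+1)) := by ring
          rw [hid2]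
          exact dvd_sub (hDe.mul_left _)
            ((dvd_trans (pow_dvd_pow _ hN2) hb').mul_right _)
      exact ⟨ha', hb', hc'⟩
  intro m hm
  obtain ⟨-, -, hfin⟩ := key m
  rw [min_eq_right hm] at hfin
  have hdvd : (Polynomial.X : PolyTX F n) ^ k ∣ φ m - R := by
    rw [← neg_sub R (φ m)]
    exact dvd_neg.mpr hfin
  exact (truncT_eq (by omega) htr hdvd).symm
end
end
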